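/- arXiv:2305.04353 — 10 statements merged into one kernel-verified Lean document; each statement's English description precedes it below -/
import Mathlib

section
/- If f : [0,A] → ℝ is continuous, differentiable on (0,A), and its derivative f' is convex on (0,A), then f has positive differences of order 3: for all x,y,z,t ≥ 0 with x+y+z+t ≤ A, f(x+t) + f(y+t) + f(z+t) + f(x+y+z+t) ≥ f(x+y+t) + f(y+z+t) + f(z+x+t) + f(t). -/
/-!
The right-hand side minus the left-hand side is the third forward difference
`Δ_z Δ_y Δ_x f (t)`. Its inner part `Δ_y Δ_x f` has derivative `Δ_y Δ_x f'`, which is nonnegative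
because `f'` is convex; hence `Δ_y Δ_x f` is monotone, and its increment over `[t, t + z]` is
nonnegative.
-/

open Set fwdDiff

theorem ConvexOn.fwdDiff_fwdDiff_nonneg {S : Set ℝ} {g : ℝ → ℝ} (hg : ConvexOn ℝ S g)
    {a b s : ℝ} (ha : 0 ≤ a) (hb : 0 ≤ b) (hs : s ∈ S) (hsab : s + a + b ∈ S) :
    0 ≤ Δ_[b] (Δ_[a] g) s := by
  simp only [fwdDiff]
  rcases ha.eq_or_lt with rfl | ha
  · simp
  rcases hb.eq_or_lt with rfl | hb
  · simp
  -- `s + a` and `s + b` divide `[s, s + a + b]` in swapped ratios, so the chord bounds add up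
  have hsa := hg.secant_mono_aux1 hs hsab (y := s + a) (by linarith) (by linarith)
  have hsb := hg.secant_mono_aux1 hs hsab (y := s + b) (by linarith) (by linarith)
  have hsum : (a + b) * (g (s + a) + g (s + b)) ≤ (a + b) * (g s + g (s + a + b)) := by
    ring_nf at hsa hsb ⊢
    linarith
  rw [add_right_comm s b a]
  linarith [le_of_mul_le_mul_left hsum (by linarith)]

theorem ContinuousOn.fwdDiff {f : ℝ → ℝ} {S T : Set ℝ} {h : ℝ} (hf : ContinuousOn f S)
    (hT : T ⊆ S) (hTh : MapsTo (· + h) T S) : ContinuousOn (Δ_[h] f) T :=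
  (hf.comp (continuousOn_id.add continuousOn_const) hTh).sub (hf.mono hT)

theorem HasDerivAt.fwdDiff {f f' : ℝ → ℝ} {h x : ℝ} (hfh : HasDerivAt f (f' (x + h)) (x + h))
    (hf : HasDerivAt f (f' x) x) : HasDerivAt (Δ_[h] f) (Δ_[h] f' x) x :=
  (hfh.comp_add_const x h).sub hf

theorem monotoneOn_fwdDiff_fwdDiff_of_convexOn_deriv {f f' : ℝ → ℝ} {p q a b : ℝ}
    (ha : 0 ≤ a) (hb : 0 ≤ b) (hcont : ContinuousOn f (Icc p q))
    (hderiv : ∀ x ∈ Ioo p q, HasDerivAt f (f' x) x) (hconv : ConvexOn ℝ (Ioo p q) f') :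
    MonotoneOn (Δ_[b] (Δ_[a] f)) (Icc p (q - a - b)) := by
  have hcont' : ContinuousOn (Δ_[b] (Δ_[a] f)) (Icc p (q - a - b)) := by
    refine ContinuousOn.fwdDiff (S := Icc p (q - a)) (hcont.fwdDiff ?_ ?_) ?_ ?_ <;>
      exact fun s ⟨h₁, h₂⟩ => ⟨by linarith, by linarith⟩
  refine monotoneOn_of_hasDerivWithinAt_nonneg (f' := Δ_[b] (Δ_[a] f')) (convex_Icc _ _) hcont'
    (fun s hs => ?_) (fun s hs => ?_) <;> rw [interior_Icc] at hs <;> obtain ⟨h₁, h₂⟩ := hs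
  · have hd : ∀ c, 0 ≤ c → c ≤ a + b → HasDerivAt f (f' (s + c)) (s + c) :=
      fun c hc hc' => hderiv _ ⟨by linarith, by linarith⟩
    refine (HasDerivAt.fwdDiff ?_ ?_).hasDerivWithinAt <;> refine HasDerivAt.fwdDiff ?_ ?_
    · simpa only [add_assoc] using hd (b + a) (by linarith) (by linarith)
    · exact hd b hb (by linarith)
    · exact hd a ha (by linarith)
    · simpa using hd 0 le_rfl (by linarith)
  · exact hconv.fwdDiff_fwdDiff_nonneg ha hb ⟨h₁, by linarith⟩ ⟨by linarith, by linarith⟩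

theorem stmt5_general (A : ℝ) (f f' : ℝ → ℝ)
    (hcont : ContinuousOn f (Set.Icc 0 A))
    (hderiv : ∀ x ∈ Set.Ioo 0 A, HasDerivAt f (f' x) x)
    (hconv : ConvexOn ℝ (Set.Ioo 0 A) f') :
    ∀ x y z t : ℝ, 0 ≤ x → 0 ≤ y → 0 ≤ z → 0 ≤ t → x + y + z + t ≤ A →
      f (x + y + t) + f (y + z + t) + f (z + x + t) + f t ≤
        f (x + t) + f (y + t) + f (z + t) + f (x + y + z + t) := by
  intro x y z t hx hy hz ht hsum
  have hmono := monotoneOn_fwdDiff_fwdDiff_of_convexOn_deriv hx hy hcont hderiv hconv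
    (⟨ht, by linarith⟩ : t ∈ Icc 0 (A - x - y)) ⟨by linarith, by linarith⟩
    (le_add_of_nonneg_right hz : t ≤ t + z)
  simp only [fwdDiff] at hmono
  ring_nf at hmono ⊢
  linarith

theorem stmt5 (A : ℝ) (hA : 0 < A) (f f' : ℝ → ℝ)
    (hcont : ContinuousOn f (Set.Icc 0 A))
    (hderiv : ∀ x ∈ Set.Ioo 0 A, HasDerivAt f (f' x) x)
    (hconv : ConvexOn ℝ (Set.Ioo 0 A) f') :
    ∀ x y z t : ℝ, 0 ≤ x → 0 ≤ y → 0 ≤ z → 0 ≤ t → x + y + z + t ≤ A →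
      f (x + y + t) + f (y + z + t) + f (z + x + t) + f t ≤
        f (x + t) + f (y + t) + f (z + t) + f (x + y + z + t) :=
  stmt5_general A f f' hcont hderiv hconv
end

section
/- A continuous function f on an interval I is convex if and only if (1/(b-a)) ∫_a^b f(x) dx ≥ (1/(b-a-2ε)) ∫_{a+ε}^{b-ε} f(x) dx for all a < b in I and all ε ∈ (0,(b-a)/2). -/
open intervalIntegral MeasureTheory Set


lemma sym_int (f : ℝ → ℝ) (m ρ : ℝ) (hρ : 0 ≤ ρ)
    (hf : ContinuousOn f (Icc (m - ρ) (m + ρ))) :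
    ∫ x in (m - ρ)..(m + ρ), f x = ∫ s in (0:ℝ)..ρ, (f (m + s) + f (m - s)) := by
  have int1 : IntervalIntegrable f volume (m - ρ) m := by
    apply ContinuousOn.intervalIntegrable
    apply hf.mono
    rw [uIcc_of_le (by linarith)]
    exact Icc_subset_Icc le_rfl (by linarith)
  have int2 : IntervalIntegrable f volume m (m + ρ) := by
    apply ContinuousOn.intervalIntegrable
    apply hf.mono
    rw [uIcc_of_le (by linarith)]
    exact Icc_subset_Icc (by linarith) le_rfl
  have e1 : ∫ s in (0:ℝ)..ρ, f (m + s) = ∫ x in m..(m + ρ), f x := by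
    have := intervalIntegral.integral_comp_add_right (a := (0:ℝ)) (b := ρ) f m
    simp only [zero_add] at this
    rw [add_comm ρ m] at this
    rw [← this]
    congr 1; ext s; rw [add_comm]
  have e2 : ∫ s in (0:ℝ)..ρ, f (m - s) = ∫ x in (m - ρ)..m, f x := by
    have := intervalIntegral.integral_comp_sub_left (a := (0:ℝ)) (b := ρ) f m
    simp only [sub_zero] at this
    rw [this]
  have i1 : IntervalIntegrable (fun s => f (m + s)) volume 0 ρ := by
    apply ContinuousOn.intervalIntegrable
    apply hf.comp (Continuous.continuousOn (by continuity))
    intro s hs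
    rw [uIcc_of_le hρ, mem_Icc] at hs
    exact ⟨by linarith [hs.1], by linarith [hs.2]⟩
  have i2 : IntervalIntegrable (fun s => f (m - s)) volume 0 ρ := by
    apply ContinuousOn.intervalIntegrable
    apply hf.comp (Continuous.continuousOn (by continuity))
    intro s hs
    rw [uIcc_of_le hρ, mem_Icc] at hs
    exact ⟨by linarith [hs.2], by linarith [hs.1]⟩
  rw [intervalIntegral.integral_add i1 i2, e1, e2,
    ← intervalIntegral.integral_add_adjacent_intervals int1 int2]
  exact add_comm _ _

lemma mean_mono (h : ℝ → ℝ) (R ρ₁ ρ₂ : ℝ) (h1 : 0 < ρ₁) (h12 : ρ₁ ≤ ρ₂) (h2R : ρ₂ ≤ R)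
    (hcont : ContinuousOn h (Icc 0 R))
    (hmono : ∀ u ∈ Icc (0:ℝ) R, ∀ v ∈ Icc (0:ℝ) R, u ≤ v → h u ≤ h v) :
    (1 / ρ₁) * ∫ s in (0:ℝ)..ρ₁, h s ≤ (1 / ρ₂) * ∫ s in (0:ℝ)..ρ₂, h s := by
  have hρ₂ : 0 < ρ₂ := lt_of_lt_of_le h1 h12
  have intOn : ∀ u v : ℝ, 0 ≤ u → u ≤ v → v ≤ R → IntervalIntegrable h volume u v := by
    intro u v hu huv hv
    apply ContinuousOn.intervalIntegrable
    apply hcont.mono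
    rw [uIcc_of_le huv]
    exact Icc_subset_Icc hu hv
  have hρ₁R : ρ₁ ∈ Icc (0:ℝ) R := ⟨h1.le, le_trans h12 h2R⟩
  have key1 : ∫ s in (0:ℝ)..ρ₁, h s ≤ ρ₁ * h ρ₁ := by
    have := intervalIntegral.integral_mono_on (f := h) (g := fun _ => h ρ₁) h1.le
      (intOn 0 ρ₁ le_rfl h1.le hρ₁R.2)
      intervalIntegrable_const
      (fun z hz => hmono z ⟨hz.1, le_trans hz.2 hρ₁R.2⟩ ρ₁ hρ₁R hz.2)
    simpa [smul_eq_mul, mul_comm] using this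
  have key2 : (ρ₂ - ρ₁) * h ρ₁ ≤ ∫ s in ρ₁..ρ₂, h s := by
    have := intervalIntegral.integral_mono_on (f := fun _ => h ρ₁) (g := h) h12
      intervalIntegrable_const
      (intOn ρ₁ ρ₂ h1.le h12 h2R)
      (fun z hz => hmono ρ₁ hρ₁R z ⟨le_trans h1.le hz.1, le_trans hz.2 h2R⟩ hz.1)
    simpa [smul_eq_mul, mul_comm] using this
  have split : ∫ s in (0:ℝ)..ρ₂, h s = (∫ s in (0:ℝ)..ρ₁, h s) + ∫ s in ρ₁..ρ₂, h s :=
    (intervalIntegral.integral_add_adjacent_intervals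
      (intOn 0 ρ₁ le_rfl h1.le hρ₁R.2) (intOn ρ₁ ρ₂ h1.le h12 h2R)).symm
  rw [div_mul_eq_mul_div, div_mul_eq_mul_div, div_le_div_iff₀ h1 hρ₂]
  rw [split]
  nlinarith [key1, key2]

lemma fwd (I : Set ℝ) (hI : I.OrdConnected) (f : ℝ → ℝ) (hf : ContinuousOn f I)
    (hc : ConvexOn ℝ I f) {a b : ℝ} (ha : a ∈ I) (hb : b ∈ I) (hab : a < b)
    {ε : ℝ} (hε : 0 < ε) (hε2 : ε < (b - a) / 2) :
    (1 / (b - a - 2 * ε)) * ∫ x in (a + ε)..(b - ε), f x ≤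
      (1 / (b - a)) * ∫ x in a..b, f x := by
  set m : ℝ := (a + b) / 2 with hm
  set R : ℝ := (b - a) / 2 with hR
  have hRpos : 0 < R := by simp [hR]; linarith
  have hρ₁pos : 0 < R - ε := by simp [hR]; linarith
  have hsub : Icc a b ⊆ I := hI.out ha hb
  have hmem : ∀ v ∈ Icc (0:ℝ) R, m + v ∈ I ∧ m - v ∈ I := by
    intro v hv
    constructor <;> apply hsub <;> constructor <;>
      [skip; skip; skip; skip] <;> simp [hm, hR] at hv ⊢ <;> linarith [hv.1, hv.2]
  set h : ℝ → ℝ := fun s => f (m + s) + f (m - s) with hh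
  have hcont : ContinuousOn h (Icc 0 R) := by
    apply ContinuousOn.add
    · apply hf.comp (Continuous.continuousOn (by continuity))
      intro s hs; exact (hmem s hs).1
    · apply hf.comp (Continuous.continuousOn (by continuity))
      intro s hs; exact (hmem s hs).2
  have hmono : ∀ u ∈ Icc (0:ℝ) R, ∀ v ∈ Icc (0:ℝ) R, u ≤ v → h u ≤ h v := by
    intro u hu v hv huv
    rcases eq_or_lt_of_le huv with rfl | hlt
    · exact le_rfl
    have hvpos : 0 < v := lt_of_le_of_lt hu.1 hlt
    have hα : (0:ℝ) ≤ (v - u) / (2 * v) := div_nonneg (by linarith) (by linarith)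
    have hβ : (0:ℝ) ≤ (v + u) / (2 * v) := div_nonneg (by linarith [hu.1]) (by linarith)
    have hαβ : (v - u) / (2 * v) + (v + u) / (2 * v) = 1 := by
      field_simp
      ring
    have k1 := hc.2 (hmem v hv).2 (hmem v hv).1 hα hβ hαβ
    have k2 := hc.2 (hmem v hv).2 (hmem v hv).1 hβ hα (by linarith)
    rw [smul_eq_mul, smul_eq_mul, smul_eq_mul, smul_eq_mul] at k1 k2
    have e1 : (v - u) / (2 * v) * (m - v) + (v + u) / (2 * v) * (m + v) = m + u := by
      field_simp; ring
    have e2 : (v + u) / (2 * v) * (m - v) + (v - u) / (2 * v) * (m + v) = m - u := by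
      field_simp; ring
    rw [e1] at k1; rw [e2] at k2
    have esum : (v - u) / (2 * v) * f (m - v) + (v + u) / (2 * v) * f (m + v)
        + ((v + u) / (2 * v) * f (m - v) + (v - u) / (2 * v) * f (m + v))
        = f (m + v) + f (m - v) := by
      have : ((v - u) / (2 * v) + (v + u) / (2 * v)) = 1 := hαβ
      field_simp
      ring
    simp only [hh]
    linarith [k1, k2]
  have key := mean_mono h R (R - ε) R hρ₁pos (by linarith) le_rfl hcont hmono
  have s1 : ∫ x in (a + ε)..(b - ε), f x = ∫ s in (0:ℝ)..(R - ε), h s := by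
    have e1 : a + ε = m - (R - ε) := by simp [hm, hR]; ring
    have e2 : b - ε = m + (R - ε) := by simp [hm, hR]; ring
    rw [e1, e2]
    apply sym_int f m (R - ε) hρ₁pos.le
    apply hf.mono
    intro z hz
    apply hsub
    simp [mem_Icc, hm, hR] at hz ⊢
    constructor <;> linarith [hz.1, hz.2]
  have s2 : ∫ x in a..b, f x = ∫ s in (0:ℝ)..R, h s := by
    have e1 : a = m - R := by simp [hm, hR]; ring
    have e2 : b = m + R := by simp [hm, hR]; ring
    rw [e1, e2]
    apply sym_int f m R hRpos.le
    apply hf.mono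
    intro z hz
    apply hsub
    simp [mem_Icc, hm, hR] at hz ⊢
    constructor <;> linarith [hz.1, hz.2]
  rw [s1, s2]
  have d1 : b - a - 2 * ε = 2 * (R - ε) := by simp [hR]; ring
  have d2 : b - a = 2 * R := by simp [hR]; ring
  rw [d1, d2]
  have r1 : (1:ℝ) / (2 * (R - ε)) = (1/2) * (1/(R - ε)) := by
    rw [one_div, one_div, one_div, mul_inv]
  have r2 : (1:ℝ) / (2 * R) = (1/2) * (1/R) := by
    rw [one_div, one_div, one_div, mul_inv]
  rw [r1, r2, mul_assoc, mul_assoc]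
  have : (0:ℝ) ≤ 1/2 := by norm_num
  exact mul_le_mul_of_nonneg_left key this



lemma maxprinc {x y : ℝ} (hxy : x < y) (g : ℝ → ℝ) (hg : ContinuousOn g (Icc x y))
    (hgx : g x = 0) (hgy : g y = 0)
    (H : ∀ a b : ℝ, a ∈ Icc x y → b ∈ Icc x y → a < b → ∀ ε : ℝ, 0 < ε → ε < (b - a) / 2 →
      (1 / (b - a - 2 * ε)) * ∫ z in (a + ε)..(b - ε), g z ≤
        (1 / (b - a)) * ∫ z in a..b, g z) :
    ∀ z ∈ Icc x y, g z ≤ 0 := by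
  intro z₀ hz₀
  by_contra hpos
  push_neg at hpos
  obtain ⟨w, hw, hwmax⟩ := isCompact_Icc.exists_isMaxOn (nonempty_Icc.2 hxy.le) hg
  rw [isMaxOn_iff] at hwmax
  set M : ℝ := g w with hM
  have hMpos : 0 < M := lt_of_lt_of_le hpos (hwmax z₀ hz₀)
  set S : Set ℝ := Icc x y ∩ g ⁻¹' {M} with hS
  have hSclosed : IsClosed S := hg.preimage_isClosed_of_isClosed isClosed_Icc isClosed_singleton
  have hScomp : IsCompact S := isCompact_Icc.of_isClosed_subset hSclosed inter_subset_left
  have hSne : S.Nonempty := ⟨w, hw, rfl⟩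
  obtain ⟨c, hcS, hcmin⟩ := hScomp.exists_isMinOn hSne continuousOn_id
  rw [isMinOn_iff] at hcmin
  simp only [id_eq] at hcmin
  obtain ⟨hcI, hcM⟩ := hcS
  simp only [mem_preimage, mem_singleton_iff] at hcM
  have hxc : x < c := by
    rcases eq_or_lt_of_le hcI.1 with h | h
    · exfalso; rw [← h, hgx] at hcM; linarith
    · exact h
  have hcy : c < y := by
    rcases eq_or_lt_of_le hcI.2 with h | h
    · exfalso; rw [h, hgy] at hcM; linarith
    · exact h
  set h : ℝ := min (c - x) (y - c) with hh
  have hhpos : 0 < h := lt_min (by linarith) (by linarith)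
  have hch1 : x ≤ c - h := by
    have := min_le_left (c - x) (y - c); simp [hh]; linarith
  have hch2 : c + h ≤ y := by
    have := min_le_right (c - x) (y - c); simp [hh]; linarith
  have hsub : Icc (c - h) (c + h) ⊆ Icc x y :=
    Icc_subset_Icc hch1 hch2
  have intOn : ∀ u v : ℝ, x ≤ u → u ≤ v → v ≤ y → IntervalIntegrable g volume u v := by
    intro u v h1 h2 h3
    apply ContinuousOn.intervalIntegrable
    apply hg.mono
    rw [uIcc_of_le h2]
    exact Icc_subset_Icc h1 h3
  -- Claim 1 : M ≤ mean over [c-h, c+h]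
  have claim1 : M ≤ (1 / (2 * h)) * ∫ z in (c - h)..(c + h), g z := by
    by_contra hlt
    push_neg at hlt
    set e : ℝ := (M - (1 / (2 * h)) * ∫ z in (c - h)..(c + h), g z) / 2 with he
    have hepos : 0 < e := by simp only [he]; linarith
    have hcont : ContinuousWithinAt g (Icc x y) c := hg c hcI
    rw [Metric.continuousWithinAt_iff] at hcont
    obtain ⟨δ, hδpos, hδ⟩ := hcont e hepos
    set δ' : ℝ := min (δ / 2) (h / 2) with hδ'
    have hδ'pos : 0 < δ' := lt_min (by linarith) (by linarith)
    have hδ'h : δ' < h := lt_of_le_of_lt (min_le_right _ _) (by linarith)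
    have hδ'δ : δ' < δ := lt_of_le_of_lt (min_le_left _ _) (by linarith)
    have hlow : ∀ z ∈ Icc (c - δ') (c + δ'), M - e ≤ g z := by
      intro z hz
      have hzI : z ∈ Icc x y := hsub ⟨by linarith [hz.1, hδ'h.le], by linarith [hz.2, hδ'h.le]⟩
      have hdist : dist z c < δ := by
        rw [Real.dist_eq, abs_sub_lt_iff]
        exact ⟨by linarith [hz.2], by linarith [hz.1]⟩
      have := hδ hzI hdist
      rw [Real.dist_eq, abs_sub_lt_iff] at this
      rw [hcM] at this
      linarith [this.1, this.2]
    have hintlow : (M - e) * (2 * δ') ≤ ∫ z in (c - δ')..(c + δ'), g z := by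
      have := intervalIntegral.integral_mono_on (f := fun _ => M - e) (g := g)
        (by linarith : c - δ' ≤ c + δ')
        intervalIntegrable_const
        (intOn (c - δ') (c + δ') (by linarith) (by linarith) (by linarith))
        hlow
      rw [intervalIntegral.integral_const, smul_eq_mul] at this
      calc (M - e) * (2 * δ') = (c + δ' - (c - δ')) * (M - e) := by ring
        _ ≤ _ := this
    have happ := H (c - h) (c + h) (hsub ⟨le_rfl, by linarith⟩) (hsub ⟨by linarith, le_rfl⟩)
      (by linarith) (h - δ') (by linarith) (by rw [show (c + h - (c - h)) / 2 = h by ring]; linarith)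
    rw [show c - h + (h - δ') = c - δ' by ring, show c + h - (h - δ') = c + δ' by ring,
      show c + h - (c - h) - 2 * (h - δ') = 2 * δ' by ring,
      show c + h - (c - h) = 2 * h by ring] at happ
    have hmean : M - e ≤ (1 / (2 * δ')) * ∫ z in (c - δ')..(c + δ'), g z := by
      rw [one_div, inv_mul_eq_div, le_div_iff₀ (by linarith)]
      linarith [hintlow]
    have : M - e ≤ (1 / (2 * h)) * ∫ z in (c - h)..(c + h), g z := le_trans hmean happ
    simp only [he] at this
    linarith
  -- Claim 2 : the integral is < 2 h M
  have int1 : IntervalIntegrable g volume (c - h) c := intOn _ _ hch1 (by linarith) (by linarith)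
  have int2 : IntervalIntegrable g volume c (c + h) := intOn _ _ (by linarith) (by linarith) hch2
  have upper2 : ∫ z in c..(c + h), g z ≤ h * M := by
    have := intervalIntegral.integral_mono_on (f := g) (g := fun _ => M)
      (by linarith : c ≤ c + h) int2 _root_.intervalIntegrable_const
      (fun z hz => hwmax z (hsub ⟨by linarith [hz.1], hz.2⟩))
    simpa [smul_eq_mul, mul_comm] using this
  have upper1 : ∫ z in (c - h)..c, g z < h * M := by
    have hpos' : 0 < ∫ z in (c - h)..c, (M - g z) := by
      apply intervalIntegral.intervalIntegral_pos_of_pos_on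
      · exact _root_.intervalIntegrable_const.sub int1
      · intro z hz
        have hzI : z ∈ Icc x y := hsub ⟨hz.1.le, by linarith [hz.2]⟩
        have hle : g z ≤ M := hwmax z hzI
        rcases eq_or_lt_of_le hle with heq | hlt
        · exfalso
          have : z ∈ S := ⟨hzI, by simpa using heq⟩
          have := hcmin z this
          linarith [hz.2]
        · linarith
      · linarith
    have := intervalIntegral.integral_sub (_root_.intervalIntegrable_const (c := M)) int1
    rw [intervalIntegral.integral_const, smul_eq_mul] at this
    rw [this] at hpos'
    have : (c - (c - h)) = h := by ring
    rw [this] at hpos'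
    linarith [hpos']
  have total : ∫ z in (c - h)..(c + h), g z < 2 * h * M := by
    rw [← intervalIntegral.integral_add_adjacent_intervals int1 int2]
    linarith [upper1, upper2]
  have : 2 * h * M ≤ ∫ z in (c - h)..(c + h), g z := by
    rw [one_div, inv_mul_eq_div, le_div_iff₀ (by linarith)] at claim1
    linarith [claim1]
  linarith


lemma lin_int (p q a b : ℝ) :
    ∫ z in a..b, (p * z + q) = (b - a) * (p * (a + b) / 2 + q) := by
  have i1 : IntervalIntegrable (fun z => p * z) volume a b :=
    (continuous_const.mul continuous_id).intervalIntegrable a b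
  have i2 : IntervalIntegrable (fun _ : ℝ => q) volume a b := intervalIntegrable_const
  rw [intervalIntegral.integral_add i1 i2, intervalIntegral.integral_const,
    intervalIntegral.integral_const_mul, integral_id, smul_eq_mul]
  ring

-- main backward step, for x < y
lemma bwd (I : Set ℝ) (hI : I.OrdConnected) (f : ℝ → ℝ) (hf : ContinuousOn f I)
    (H : ∀ a b : ℝ, a ∈ I → b ∈ I → a < b → ∀ ε : ℝ, 0 < ε → ε < (b - a) / 2 →
      (1 / (b - a - 2 * ε)) * ∫ x in (a + ε)..(b - ε), f x ≤
        (1 / (b - a)) * ∫ x in a..b, f x)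
    {x y : ℝ} (hx : x ∈ I) (hy : y ∈ I) (hxy : x < y) :
    ∀ z ∈ Icc x y, f z ≤ f x + (f y - f x) / (y - x) * (z - x) := by
  have hyx : y - x ≠ 0 := by linarith
  set p : ℝ := (f y - f x) / (y - x) with hp
  set q : ℝ := f x - p * x with hq
  have hsub : Icc x y ⊆ I := hI.out hx hy
  set g : ℝ → ℝ := fun z => f z - (p * z + q) with hg
  have hgc : ContinuousOn g (Icc x y) :=
    (hf.mono hsub).sub (Continuous.continuousOn (by continuity))
  have hgx : g x = 0 := by simp [hg, hq]
  have hgy : g y = 0 := by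
    simp only [hg, hq, hp]
    field_simp
    ring
  have Hg : ∀ a b : ℝ, a ∈ Icc x y → b ∈ Icc x y → a < b → ∀ ε : ℝ, 0 < ε → ε < (b - a) / 2 →
      (1 / (b - a - 2 * ε)) * ∫ z in (a + ε)..(b - ε), g z ≤
        (1 / (b - a)) * ∫ z in a..b, g z := by
    intro a b ha hb hab ε hε hε2
    have haI : a ∈ I := hsub ha
    have hbI : b ∈ I := hsub hb
    have hfI := H a b haI hbI hab ε hε hε2
    have hd1 : (0:ℝ) < b - a - 2 * ε := by linarith
    have hd2 : (0:ℝ) < b - a := by linarith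
    have intf : ∀ u v : ℝ, a ≤ u → u ≤ v → v ≤ b → IntervalIntegrable f volume u v := by
      intro u v h1 h2 h3
      apply ContinuousOn.intervalIntegrable
      apply hf.mono
      rw [uIcc_of_le h2]
      intro z hz
      exact hsub ⟨le_trans ha.1 (le_trans h1 hz.1), le_trans hz.2 (le_trans h3 hb.2)⟩
    have intL : ∀ u v : ℝ, IntervalIntegrable (fun z => p * z + q) volume u v := by
      intro u v
      exact ((continuous_const.mul continuous_id).add continuous_const).intervalIntegrable u v
    have e1 : ∫ z in (a + ε)..(b - ε), g z =
        (∫ z in (a + ε)..(b - ε), f z) - (b - a - 2 * ε) * (p * (a + b) / 2 + q) := by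
      rw [show (fun z => g z) = fun z => f z - (p * z + q) from rfl]
      rw [intervalIntegral.integral_sub (intf _ _ (by linarith) (by linarith) (by linarith))
        (intL _ _), lin_int]
      congr 1
      have : b - ε - (a + ε) = b - a - 2 * ε := by ring
      rw [this]
      have : a + ε + (b - ε) = a + b := by ring
      rw [this]
    have e2 : ∫ z in a..b, g z =
        (∫ z in a..b, f z) - (b - a) * (p * (a + b) / 2 + q) := by
      rw [show (fun z => g z) = fun z => f z - (p * z + q) from rfl]
      rw [intervalIntegral.integral_sub (intf _ _ le_rfl (by linarith) le_rfl) (intL _ _), lin_int]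
    rw [e1, e2, mul_sub, mul_sub]
    have r1 : (1 / (b - a - 2 * ε)) * ((b - a - 2 * ε) * (p * (a + b) / 2 + q))
        = p * (a + b) / 2 + q := by
      field_simp
    have r2 : (1 / (b - a)) * ((b - a) * (p * (a + b) / 2 + q)) = p * (a + b) / 2 + q := by
      field_simp
    rw [r1, r2]
    linarith [hfI]
  have key := maxprinc hxy g hgc hgx hgy Hg
  intro z hz
  have := key z hz
  simp only [hg, hq] at this
  linarith [this]

theorem stmt7 (I : Set ℝ) (hI : I.OrdConnected) (f : ℝ → ℝ)
    (hf : ContinuousOn f I) :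
    ConvexOn ℝ I f ↔
      ∀ a b : ℝ, a ∈ I → b ∈ I → a < b → ∀ ε : ℝ, 0 < ε → ε < (b - a) / 2 →
        (1 / (b - a - 2 * ε)) * ∫ x in (a + ε)..(b - ε), f x ≤
          (1 / (b - a)) * ∫ x in a..b, f x := by
  constructor
  · intro hc a b ha hb hab ε hε hε2
    exact fwd I hI f hf hc ha hb hab hε hε2
  · intro H
    refine ⟨convex_iff_ordConnected.mpr hI, ?_⟩
    intro x hx y hy s t hs ht hst
    simp only [smul_eq_mul]
    rcases lt_trichotomy x y with hxy | rfl | hxy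
    · have key := bwd I hI f hf H hx hy hxy
      have hs1 : s = 1 - t := by linarith
      subst hs1
      have hz : (1 - t) * x + t * y ∈ Icc x y := by
        constructor
        · nlinarith [mul_nonneg ht (show (0:ℝ) ≤ y - x by linarith)]
        · nlinarith [mul_nonneg hs (show (0:ℝ) ≤ y - x by linarith)]
      have hk := key _ hz
      have hyx : y - x ≠ 0 := by intro h'; nlinarith
      have e : f x + (f y - f x) / (y - x) * ((1 - t) * x + t * y - x)
          = (1 - t) * f x + t * f y := by
        field_simp
        ring
      linarith [hk, e.ge, e.le]
    · have e1 : s * x + t * x = x := by linear_combination x * hst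
      have e2 : s * f x + t * f x = f x := by linear_combination (f x) * hst
      rw [e1, e2]
    · have key := bwd I hI f hf H hy hx hxy
      have ht1 : t = 1 - s := by linarith
      subst ht1
      have hz : s * x + (1 - s) * y ∈ Icc y x := by
        constructor
        · nlinarith [mul_nonneg hs (show (0:ℝ) ≤ x - y by linarith)]
        · nlinarith [mul_nonneg ht (show (0:ℝ) ≤ x - y by linarith)]
      have hk := key _ hz
      have hxy' : x - y ≠ 0 := by intro h'; nlinarith
      have e : f y + (f x - f y) / (x - y) * (s * x + (1 - s) * y - y)
          = s * f x + (1 - s) * f y := by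
        field_simp
        ring
      linarith [hk, e.ge, e.le]
end

section
/- A continuous function f on an interval I is convex if and only if (1/(2ε)) ∫_a^{a+ε} f(x) dx + (1/(2ε)) ∫_{b-ε}^b f(x) dx ≥ (1/(b-a)) ∫_a^b f(x) dx for all a < b in I and all ε ∈ (0,(b-a)/2). -/
/-!
Fold `[a, b]` at its midpoint `m`: `∫ a..b f` and the two edge integrals become integrals of
`G x = f x + f (a + b - x)` over `[a, m]` and `[a, a + ε]`. For convex `f` the function `G` is
antitone on `[a, m]`, and averages of an antitone function decrease as the interval grows.

Conversely, letting `ε → 0` gives `⨍ f ≤ (f a + f b) / 2`; letting `ε → (b - a) / 2`,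
after rewriting the hypothesis as a bound on the central average over `[a + ε, b - ε]`,
gives `f m ≤ ⨍ f`. Hence `f` is midpoint convex, and a continuous midpoint convex function
is convex.
-/

open MeasureTheory intervalIntegral Set Filter Topology

section IntegralSlopes

variable {f : ℝ → ℝ} {a b x : ℝ}

theorem ContinuousOn.intervalIntegrable_of_mem_Icc (hf : ContinuousOn f (Icc a b)) {u v : ℝ}
    (hu : u ∈ Icc a b) (hv : v ∈ Icc a b) : IntervalIntegrable f volume u v :=
  (hf.mono (uIcc_subset_Icc hu hv)).intervalIntegrable

theorem tendsto_slope_integral_nhdsWithin_Icc (hf : ContinuousOn f (Icc a b))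
    (hx : x ∈ Icc a b) :
    Tendsto (slope (fun u => ∫ t in x..u, f t) x) (𝓝[Icc a b \ {x}] x) (𝓝 (f x)) := by
  have : Fact (x ∈ Icc a b) := ⟨hx⟩
  rw [← hasDerivWithinAt_iff_tendsto_slope]
  exact integral_hasDerivWithinAt_right .refl
    (hf.stronglyMeasurableAtFilter_nhdsWithin measurableSet_Icc x) (hf x hx)

theorem tendsto_integral_div_right (hf : ContinuousOn f (Icc a b)) (hx : x ∈ Ico a b) :
    Tendsto (fun ε => (∫ t in x..x + ε, f t) / ε) (𝓝[>] 0) (𝓝 (f x)) := by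
  have hshift : Tendsto (fun ε => x + ε) (𝓝[>] 0) (𝓝[Icc a b \ {x}] x) := by
    refine tendsto_nhdsWithin_of_tendsto_nhds_of_eventually_within _ ?_ ?_
    · simpa using (continuous_const_add x).continuousWithinAt.tendsto (x := 0) (s := Ioi 0)
    · filter_upwards [Ioo_mem_nhdsGT (sub_pos.2 hx.2)] with ε hε
      exact ⟨⟨by linarith [hx.1, hε.1], by linarith [hε.2]⟩, by simpa using hε.1.ne'⟩
  refine ((tendsto_slope_integral_nhdsWithin_Icc hf (Ico_subset_Icc_self hx)).comp
    hshift).congr fun ε => ?_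
  simp [slope_def_field, div_eq_inv_mul]

theorem tendsto_integral_div_left (hf : ContinuousOn f (Icc a b)) (hx : x ∈ Ioc a b) :
    Tendsto (fun ε => (∫ t in x - ε..x, f t) / ε) (𝓝[>] 0) (𝓝 (f x)) := by
  have hshift : Tendsto (fun ε => x - ε) (𝓝[>] 0) (𝓝[Icc a b \ {x}] x) := by
    refine tendsto_nhdsWithin_of_tendsto_nhds_of_eventually_within _ ?_ ?_
    · simpa using ((continuous_sub_left x).tendsto 0).mono_left nhdsWithin_le_nhds
    · filter_upwards [Ioo_mem_nhdsGT (sub_pos.2 hx.1)] with ε hε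
      exact ⟨⟨by linarith [hε.2], by linarith [hx.2, hε.1]⟩, by simpa using hε.1.ne'⟩
  refine ((tendsto_slope_integral_nhdsWithin_Icc hf (Ioc_subset_Icc_self hx)).comp
    hshift).congr fun ε => ?_
  simp [slope_def_field, integral_symm x, div_neg, neg_div]

end IntegralSlopes

section ConvexReflection

variable {𝕜 : Type*} [Field 𝕜] [LinearOrder 𝕜] [IsStrictOrderedRing 𝕜]
  {f : 𝕜 → 𝕜}

theorem ConvexOn.mul_sub_le_of_mem_Icc {s : Set 𝕜} (hf : ConvexOn 𝕜 s f) {x y z : 𝕜}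
    (hx : x ∈ s) (hz : z ∈ s) (hy : y ∈ Icc x z) :
    (z - x) * f y ≤ (z - y) * f x + (y - x) * f z := by
  rcases hy.1.eq_or_lt with rfl | hxy
  · linarith
  rcases hy.2.eq_or_lt with rfl | hyz
  · linarith
  exact hf.secant_mono_aux1 hx hz hxy hyz

theorem ConvexOn.add_le_add_of_add_eq {s : Set 𝕜} (hf : ConvexOn 𝕜 s f) {x y z w : 𝕜}
    (hx : x ∈ s) (hw : w ∈ s) (hy : y ∈ Icc x w) (hz : z ∈ Icc x w) (hsum : y + z = x + w) :
    f y + f z ≤ f x + f w := by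
  rcases (hy.1.trans hy.2).eq_or_lt with rfl | hxw
  · obtain rfl : y = x := le_antisymm hy.2 hy.1
    obtain rfl : z = y := le_antisymm hz.2 hz.1
    rfl
  have hfy := hf.mul_sub_le_of_mem_Icc hx hw hy
  have hfz := hf.mul_sub_le_of_mem_Icc hx hw hz
  refine le_of_mul_le_mul_left ?_ (sub_pos.2 hxw)
  linear_combination hfy + hfz + (f w - f x) * hsum

theorem ConvexOn.antitoneOn_add_comp_sub {a b : 𝕜} (hf : ConvexOn 𝕜 (Icc a b) f) :
    AntitoneOn (fun x => f x + f (a + b - x)) (Icc a ((a + b) / 2)) := by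
  rintro x ⟨hax, hxm⟩ y ⟨hay, hym⟩ hxy
  exact hf.add_le_add_of_add_eq ⟨hax, by linarith⟩ ⟨by linarith, by linarith⟩
    ⟨hxy, by linarith⟩ ⟨by linarith, by linarith⟩ (by ring)

end ConvexReflection

theorem AntitoneOn.integral_div_le_integral_div {g : ℝ → ℝ} {a t c : ℝ}
    (hg : AntitoneOn g (Icc a c)) (hat : a < t) (htc : t ≤ c) :
    (∫ x in a..c, g x) / (c - a) ≤ (∫ x in a..t, g x) / (t - a) := by
  have hint : ∀ u ∈ Icc a c, ∀ v ∈ Icc a c, IntervalIntegrable g volume u v :=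
    fun u hu v hv => (hg.mono (uIcc_subset_Icc hu hv)).intervalIntegrable
  have ht : t ∈ Icc a c := ⟨hat.le, htc⟩
  have ha : a ∈ Icc a c := ⟨le_rfl, hat.le.trans htc⟩
  have hc : c ∈ Icc a c := ⟨ha.2, le_rfl⟩
  have hleft : (t - a) * g t ≤ ∫ x in a..t, g x := by
    simpa using integral_mono_on hat.le intervalIntegrable_const (hint a ha t ht)
      fun x hx => hg ⟨hx.1, hx.2.trans htc⟩ ht hx.2
  have hright : ∫ x in t..c, g x ≤ (c - t) * g t := by
    simpa using integral_mono_on htc (hint t ht c hc) intervalIntegrable_const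
      fun x hx => hg ht ⟨hat.le.trans hx.1, hx.2⟩ hx.1
  rw [← integral_add_adjacent_intervals (hint a ha t ht) (hint t ht c hc),
    div_le_div_iff₀ (by linarith) (by linarith)]
  nlinarith [mul_le_mul_of_nonneg_left hleft (sub_nonneg.2 htc),
    mul_le_mul_of_nonneg_left hright (sub_nonneg.2 hat.le)]

def EdgeAverageBound (f : ℝ → ℝ) (a b : ℝ) : Prop :=
  ∀ ε, 0 < ε → ε < (b - a) / 2 →
    (∫ x in a..b, f x) / (b - a) ≤
      ((∫ x in a..a + ε, f x) + ∫ x in b - ε..b, f x) / (2 * ε)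

theorem ConvexOn.edgeAverageBound {f : ℝ → ℝ} {a b : ℝ} (hf : ConvexOn ℝ (Icc a b) f)
    (hcont : ContinuousOn f (Icc a b)) : EdgeAverageBound f a b := by
  intro ε hε hεab
  have ha : a ∈ Icc a b := ⟨le_rfl, by linarith⟩
  have hb : b ∈ Icc a b := ⟨by linarith, le_rfl⟩
  have hfold : ∀ u ∈ Icc a b, ∫ x in a..u, (f x + f (a + b - x)) =
      (∫ x in a..u, f x) + ∫ x in a + b - u..b, f x := by
    intro u hu
    have hu' : a + b - u ∈ Icc a b := ⟨by linarith [hu.2], by linarith [hu.1]⟩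
    rw [integral_add (hcont.intervalIntegrable_of_mem_Icc ha hu)
        (by simpa using (hcont.intervalIntegrable_of_mem_Icc hb hu').comp_sub_left (a + b)),
      integral_comp_sub_left (fun x => f x) (a + b), add_sub_cancel_left]
  have hm : (a + b) / 2 ∈ Icc a b := ⟨by linarith, by linarith⟩
  have hwhole : ∫ x in a..(a + b) / 2, (f x + f (a + b - x)) = ∫ x in a..b, f x := by
    rw [hfold _ hm, show a + b - (a + b) / 2 = (a + b) / 2 by ring,
      integral_add_adjacent_intervals (hcont.intervalIntegrable_of_mem_Icc ha hm)
        (hcont.intervalIntegrable_of_mem_Icc hm hb)]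
  have hedge : ∫ x in a..a + ε, (f x + f (a + b - x)) =
      (∫ x in a..a + ε, f x) + ∫ x in b - ε..b, f x := by
    rw [hfold _ ⟨by linarith, by linarith⟩, show a + b - (a + ε) = b - ε by ring]
  have havg := hf.antitoneOn_add_comp_sub.integral_div_le_integral_div
    (lt_add_of_pos_right a hε) (show a + ε ≤ (a + b) / 2 by linarith)
  rw [hwhole, hedge, show (a + b) / 2 - a = (b - a) / 2 by ring, add_sub_cancel_left] at havg
  calc (∫ x in a..b, f x) / (b - a) = (∫ x in a..b, f x) / ((b - a) / 2) / 2 := by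
        field_simp
    _ ≤ ((∫ x in a..a + ε, f x) + ∫ x in b - ε..b, f x) / ε / 2 := by gcongr
    _ = _ := by field_simp

namespace EdgeAverageBound

variable {f : ℝ → ℝ} {a b : ℝ}

theorem integral_div_le_add_div_two (H : EdgeAverageBound f a b) (hab : a < b)
    (hf : ContinuousOn f (Icc a b)) : (∫ x in a..b, f x) / (b - a) ≤ (f a + f b) / 2 := by
  have hlim : Tendsto (fun ε => ((∫ x in a..a + ε, f x) + ∫ x in b - ε..b, f x) / (2 * ε))
      (𝓝[>] 0) (𝓝 ((f a + f b) / 2)) := by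
    refine (((tendsto_integral_div_right hf (left_mem_Ico.2 hab)).add
      (tendsto_integral_div_left hf (right_mem_Ioc.2 hab))).div_const 2).congr' ?_
    filter_upwards [self_mem_nhdsWithin] with ε (hε : 0 < ε)
    field_simp
  refine ge_of_tendsto hlim ?_
  filter_upwards [Ioo_mem_nhdsGT (half_pos (sub_pos.2 hab))] with ε hε using H ε hε.1 hε.2

theorem map_midpoint_le_integral_div (H : EdgeAverageBound f a b) (hab : a < b)
    (hf : ContinuousOn f (Icc a b)) : f ((a + b) / 2) ≤ (∫ x in a..b, f x) / (b - a) := by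
  obtain ⟨m, hm_def⟩ : ∃ m, (a + b) / 2 = m := ⟨_, rfl⟩
  rw [hm_def]
  have hsplit : ∀ r ∈ Ioo 0 ((b - a) / 2), (∫ x in a..b, f x) =
      (∫ x in a..m - r, f x) + ((∫ x in m - r..m, f x) + ∫ x in m..m + r, f x) +
        ∫ x in m + r..b, f x := by
    rintro r ⟨hr, hrb⟩
    have ha : a ∈ Icc a b := ⟨le_rfl, hab.le⟩
    have hb : b ∈ Icc a b := ⟨hab.le, le_rfl⟩
    have hl : m - r ∈ Icc a b := ⟨by linarith, by linarith⟩
    have hm : m ∈ Icc a b := ⟨by linarith, by linarith⟩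
    have hr' : m + r ∈ Icc a b := ⟨by linarith, by linarith⟩
    rw [integral_add_adjacent_intervals (hf.intervalIntegrable_of_mem_Icc hl hm)
        (hf.intervalIntegrable_of_mem_Icc hm hr'),
      integral_add_adjacent_intervals (hf.intervalIntegrable_of_mem_Icc ha hl)
        (hf.intervalIntegrable_of_mem_Icc hl hr'),
      integral_add_adjacent_intervals (hf.intervalIntegrable_of_mem_Icc ha hr')
        (hf.intervalIntegrable_of_mem_Icc hr' hb)]
  have hcentral : ∀ r ∈ Ioo 0 ((b - a) / 2),
      ((∫ x in m - r..m, f x) + ∫ x in m..m + r, f x) / (2 * r) ≤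
        (∫ x in a..b, f x) / (b - a) := by
    rintro r ⟨hr, hrb⟩
    have h := H ((b - a) / 2 - r) (by linarith) (by linarith)
    rw [show a + ((b - a) / 2 - r) = m - r by linarith,
      show b - ((b - a) / 2 - r) = m + r by linarith,
      show 2 * ((b - a) / 2 - r) = (b - a) - 2 * r by ring] at h
    rw [hsplit r ⟨hr, hrb⟩] at h ⊢
    -- the full average is a mediant of the edge average and the central average
    rw [div_le_div_iff₀ (by linarith) (by linarith)] at h ⊢
    nlinarith
  have hm : m ∈ Ioo a b := ⟨by linarith, by linarith⟩
  have hlim : Tendsto (fun r => ((∫ x in m - r..m, f x) + ∫ x in m..m + r, f x) / (2 * r))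
      (𝓝[>] 0) (𝓝 (f m)) := by
    have h := ((tendsto_integral_div_left hf (Ioo_subset_Ioc_self hm)).add
      (tendsto_integral_div_right hf (Ioo_subset_Ico_self hm))).div_const 2
    rw [add_self_div_two] at h
    refine h.congr' ?_
    filter_upwards [self_mem_nhdsWithin] with r (hr : 0 < r)
    field_simp
  refine le_of_tendsto hlim ?_
  filter_upwards [Ioo_mem_nhdsGT (half_pos (sub_pos.2 hab))] with r hr using hcentral r hr

end EdgeAverageBound

theorem nonpos_of_midpoint_le_of_mem_Icc {g : ℝ → ℝ} {a b z : ℝ}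
    (hg : ContinuousOn g (Icc a b))
    (hmid : ∀ x ∈ Icc a b, ∀ y ∈ Icc a b, x < y → g ((x + y) / 2) ≤ (g x + g y) / 2)
    (ha : g a ≤ 0) (hb : g b ≤ 0) (hz : z ∈ Icc a b) : g z ≤ 0 := by
  obtain ⟨c, hc, hmax⟩ := isCompact_Icc.exists_isMaxOn ⟨z, hz⟩ hg
  refine (hmax hz).trans (not_lt.1 fun hpos => ?_)
  -- reflect the maximiser `c` through the nearer endpoint: then `c` is a midpoint
  rcases le_total c ((a + b) / 2) with hcm | hcm
  · have hac : a < c := hc.1.lt_of_ne (by rintro rfl; linarith)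
    have hrefl : 2 * c - a ∈ Icc a b := ⟨by linarith, by linarith⟩
    have h := hmid a ⟨le_rfl, hc.1.trans hc.2⟩ (2 * c - a) hrefl (by linarith)
    have hle : g (2 * c - a) ≤ g c := hmax hrefl
    rw [show (a + (2 * c - a)) / 2 = c by ring] at h
    linarith
  · have hcb : c < b := hc.2.lt_of_ne (by rintro rfl; linarith)
    have hrefl : 2 * c - b ∈ Icc a b := ⟨by linarith, by linarith⟩
    have h := hmid (2 * c - b) hrefl b ⟨hc.1.trans hc.2, le_rfl⟩ (by linarith)
    have hle : g (2 * c - b) ≤ g c := hmax hrefl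
    rw [show (2 * c - b + b) / 2 = c by ring] at h
    linarith

theorem convexOn_of_midpoint_le {s : Set ℝ} {f : ℝ → ℝ} (hs : s.OrdConnected)
    (hf : ContinuousOn f s)
    (hmid : ∀ x ∈ s, ∀ y ∈ s, x < y → f ((x + y) / 2) ≤ (f x + f y) / 2) :
    ConvexOn ℝ s f := by
  refine LinearOrder.convexOn_of_lt hs.convex fun x hx y hy hxy p q hp hq hpq => ?_
  have hsub := hs.out hx hy
  -- `(y - x)` times the gap between `f` and its chord over `[x, y]`
  set g := fun z => (y - x) * f z - ((y - z) * f x + (z - x) * f y) with hg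
  have hgcont : ContinuousOn g (Icc x y) :=
    (continuousOn_const.mul (hf.mono hsub)).sub (by fun_prop)
  have hgmid :
      ∀ u ∈ Icc x y, ∀ v ∈ Icc x y, u < v → g ((u + v) / 2) ≤ (g u + g v) / 2 := by
    intro u hu v hv huv
    have := mul_le_mul_of_nonneg_left (hmid u (hsub hu) v (hsub hv) huv) (sub_nonneg.2 hxy.le)
    simp only [hg]
    linarith
  have hpq_mem : p • x + q • y ∈ Icc x y :=
    segment_eq_Icc hxy.le ▸ ⟨p, q, hp.le, hq.le, hpq, rfl⟩
  have h := nonpos_of_midpoint_le_of_mem_Icc hgcont hgmid (by simp [hg]) (by simp [hg]) hpq_mem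
  simp only [hg, smul_eq_mul] at h ⊢
  refine le_of_mul_le_mul_left ?_ (sub_pos.2 hxy)
  linear_combination h + (f y * x - f x * y) * hpq

theorem stmt8 (I : Set ℝ) (hI : I.OrdConnected) (f : ℝ → ℝ)
    (hf : ContinuousOn f I) :
    ConvexOn ℝ I f ↔
      ∀ a b : ℝ, a ∈ I → b ∈ I → a < b → ∀ ε : ℝ, 0 < ε → ε < (b - a) / 2 →
        (1 / (b - a)) * ∫ x in a..b, f x ≤
          (1 / (2 * ε)) * (∫ x in a..(a + ε), f x) +
            (1 / (2 * ε)) * ∫ x in (b - ε)..b, f x := by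
  simp only [one_div_mul_eq_div, ← add_div]
  change ConvexOn ℝ I f ↔ ∀ a b, a ∈ I → b ∈ I → a < b → EdgeAverageBound f a b
  refine ⟨fun hconv a b ha hb _ => ?_,
    fun H => convexOn_of_midpoint_le hI hf fun x hx y hy hxy => ?_⟩
  · exact (hconv.subset (hI.out ha hb) (convex_Icc a b)).edgeAverageBound
      (hf.mono (hI.out ha hb))
  · have hfxy := hf.mono (hI.out hx hy)
    exact ((H x y hx hy hxy).map_midpoint_le_integral_div hxy hfxy).trans
      ((H x y hx hy hxy).integral_div_le_add_div_two hxy hfxy)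
end

section
/- Let f : I → ℝ be continuous on I and C¹ on the interior of I. Then f' is convex on int I if and only if f'((a+b)/2) ≤ (f(b) - f(a))/(b-a) for all a < b in int I. -/
/-!
Hermite–Hadamard: a convex `g` satisfies `(b - a) g((a + b)/2) ≤ ∫ₐᵇ g`, since `g(x) + g(a + b - x)`
dominates `2 g((a + b)/2)` pointwise. Conversely, this inequality is invariant under adding affine
functions, so if a continuous `g` rose above a chord, `g` minus that chord would have a positive
interior maximum `M` at some `c`; on the largest interval centred at `c` inside the chord's span,
the integral is then less than the length times `M`, against the inequality. With `g = f'`,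
the fundamental theorem of calculus turns `∫ₐᵇ f'` into `f b - f a`.
-/

open Set intervalIntegral MeasureTheory

theorem ConvexOn.mul_apply_midpoint_le_intervalIntegral {s : Set ℝ} {g : ℝ → ℝ}
    (hg : ConvexOn ℝ s g) {a b : ℝ} (hab : a ≤ b) (hs : Icc a b ⊆ s)
    (hint : IntervalIntegrable g volume a b) :
    (b - a) * g ((a + b) / 2) ≤ ∫ x in a..b, g x := by
  have hreflect : (∫ x in a..b, g (a + b - x)) = ∫ x in a..b, g x := by
    rw [integral_comp_sub_left g (a + b), add_sub_cancel_right, add_sub_cancel_left]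
  have hint' : IntervalIntegrable (fun x ↦ g (a + b - x)) volume a b := by
    simpa using hint.symm.comp_sub_left (a + b)
  have hpointwise : ∀ x ∈ Icc a b, 2 * g ((a + b) / 2) ≤ g (a + b - x) + g x := by
    intro x hx
    have hx' : a + b - x ∈ s := hs ⟨by linarith [hx.2], by linarith [hx.1]⟩
    have := hg.2 hx' (hs hx) (by norm_num : (0 : ℝ) ≤ 1 / 2) (by norm_num : (0 : ℝ) ≤ 1 / 2)
      (by norm_num)
    simp only [smul_eq_mul] at this
    rw [show 1 / 2 * (a + b - x) + 1 / 2 * x = (a + b) / 2 by ring] at this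
    linarith
  have hmono := integral_mono_on hab intervalIntegrable_const (hint'.add hint) hpointwise
  rw [intervalIntegral.integral_const, smul_eq_mul, integral_add hint' hint, hreflect] at hmono
  linarith

theorem intervalIntegral.integral_const_add_mul_sub (a b c k d : ℝ) :
    (∫ x in a..b, (c + k * (x - d))) = (b - a) * (c + k * ((a + b) / 2 - d)) := by
  have hlin : IntervalIntegrable (fun x ↦ k * (x - d)) volume a b :=
    (by fun_prop : Continuous fun x : ℝ ↦ k * (x - d)).intervalIntegrable a b
  rw [integral_add intervalIntegrable_const hlin, intervalIntegral.integral_const_mul,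
    integral_sub intervalIntegrable_id intervalIntegrable_const, integral_id,
    intervalIntegral.integral_const, intervalIntegral.integral_const, smul_eq_mul, smul_eq_mul]
  ring

theorem nonpos_of_mul_apply_midpoint_le_intervalIntegral {h : ℝ → ℝ} {x y : ℝ}
    (hcont : ContinuousOn h (Icc x y)) (hx : h x ≤ 0) (hy : h y ≤ 0)
    (hmid : ∀ a b, x ≤ a → a < b → b ≤ y → (b - a) * h ((a + b) / 2) ≤ ∫ u in a..b, h u) :
    ∀ z ∈ Icc x y, h z ≤ 0 := by
  intro z hz
  by_contra! hzpos
  obtain ⟨c, hc, hcmax⟩ := isCompact_Icc.exists_isMaxOn ⟨z, hz⟩ hcont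
  have hcpos : 0 < h c := hzpos.trans_le (hcmax hz)
  have hxc : x < c := hc.1.lt_of_ne (by rintro rfl; linarith)
  have hcy : c < y := hc.2.lt_of_ne (by rintro rfl; linarith)
  obtain ⟨δ, hδ, hxa, hby, hend⟩ :
      ∃ δ > 0, x ≤ c - δ ∧ c + δ ≤ y ∧ (c - δ = x ∨ c + δ = y) := by
    rcases le_total (c - x) (y - c) with hle | hle
    · exact ⟨c - x, by linarith, by linarith, by linarith, Or.inl (by ring)⟩
    · exact ⟨y - c, by linarith, by linarith, by linarith, Or.inr (by ring)⟩
  have hsub : Icc (c - δ) (c + δ) ⊆ Icc x y := Icc_subset_Icc hxa hby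
  have hend' : ∃ p ∈ Icc (c - δ) (c + δ), h p < h c := by
    rcases hend with hxend | hyend
    · exact ⟨c - δ, left_mem_Icc.2 (by linarith), by rw [hxend]; linarith⟩
    · exact ⟨c + δ, right_mem_Icc.2 (by linarith), by rw [hyend]; linarith⟩
  have hlt : (∫ u in (c - δ)..(c + δ), h u) < ∫ _ in (c - δ)..(c + δ), h c :=
    integral_lt_integral_of_continuousOn_of_le_of_exists_lt (by linarith) (hcont.mono hsub)
      continuousOn_const (fun u hu ↦ hcmax (hsub (Ioc_subset_Icc_self hu))) hend'
  have hle := hmid (c - δ) (c + δ) hxa (by linarith) hby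
  rw [intervalIntegral.integral_const, smul_eq_mul] at hlt
  rw [show (c - δ + (c + δ)) / 2 = c by ring] at hle
  linarith

theorem convexOn_of_mul_apply_midpoint_le_intervalIntegral {s : Set ℝ} {g : ℝ → ℝ}
    (hs : s.OrdConnected) (hg : ContinuousOn g s)
    (hmid : ∀ a ∈ s, ∀ b ∈ s, a < b → (b - a) * g ((a + b) / 2) ≤ ∫ u in a..b, g u) :
    ConvexOn ℝ s g := by
  refine LinearOrder.convexOn_of_lt hs.convex fun x hx y hy hxy t u ht hu htu ↦ ?_
  have hxys : Icc x y ⊆ s := hs.out hx hy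
  have hyx : y - x ≠ 0 := (sub_pos.2 hxy).ne'
  set k := (g y - g x) / (y - x)
  have hchord : ∀ z ∈ Icc x y, g z - (g x + k * (z - x)) ≤ 0 := by
    refine nonpos_of_mul_apply_midpoint_le_intervalIntegral
      ((hg.mono hxys).sub (by fun_prop)) (by simp) (by simp [k, div_mul_cancel₀ _ hyx]) ?_
    intro a b hxa hab hby
    have hab_sub : Icc a b ⊆ s := hxys.trans' (Icc_subset_Icc hxa hby)
    rw [integral_sub ((hg.mono hab_sub).intervalIntegrable_of_Icc hab.le)
      ((by fun_prop : Continuous fun z ↦ g x + k * (z - x)).intervalIntegrable a b),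
      intervalIntegral.integral_const_add_mul_sub]
    linarith [hmid a (hab_sub (left_mem_Icc.2 hab.le)) b (hab_sub (right_mem_Icc.2 hab.le)) hab]
  have hz : t • x + u • y ∈ Icc x y := by
    rw [← segment_eq_Icc hxy.le]; exact ⟨t, u, ht.le, hu.le, htu, rfl⟩
  obtain rfl : t = 1 - u := by linarith
  have hsecant : k * (((1 - u) • x + u • y) - x) = u * (g y - g x) := by
    simp only [k, smul_eq_mul]
    field_simp
    ring
  have := hchord _ hz
  rw [hsecant] at this
  simp only [smul_eq_mul] at this ⊢
  linarith

theorem Set.OrdConnected.integral_eq_sub_of_hasDerivAt {s : Set ℝ} (hs : s.OrdConnected)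
    {f f' : ℝ → ℝ} (hderiv : ∀ x ∈ s, HasDerivAt f (f' x) x) (hcont : ContinuousOn f' s) {a b : ℝ}
    (ha : a ∈ s) (hb : b ∈ s) : (∫ x in a..b, f' x) = f b - f a :=
  intervalIntegral.integral_eq_sub_of_hasDerivAt (fun x hx ↦ hderiv x (hs.uIcc_subset ha hb hx))
    (hcont.mono (hs.uIcc_subset ha hb)).intervalIntegrable

theorem stmt10_general (I : Set ℝ) (hI : I.OrdConnected) (f f' : ℝ → ℝ)
    (hderiv : ∀ x ∈ interior I, HasDerivAt f (f' x) x)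
    (hcont' : ContinuousOn f' (interior I)) :
    ConvexOn ℝ (interior I) f' ↔
      ∀ a b : ℝ, a ∈ interior I → b ∈ interior I → a < b →
        f' ((a + b) / 2) ≤ (f b - f a) / (b - a) := by
  have hJ : (interior I).OrdConnected := hI.interior
  have hslope : ∀ a ∈ interior I, ∀ b ∈ interior I, a < b →
      (f' ((a + b) / 2) ≤ (f b - f a) / (b - a) ↔
        (b - a) * f' ((a + b) / 2) ≤ ∫ x in a..b, f' x) := fun a ha b hb hab ↦ by
    rw [hJ.integral_eq_sub_of_hasDerivAt hderiv hcont' ha hb, le_div_iff₀ (sub_pos.2 hab),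
      mul_comm]
  constructor
  · intro hconv a b ha hb hab
    exact (hslope a ha b hb hab).2 <| hconv.mul_apply_midpoint_le_intervalIntegral hab.le
      (hJ.out ha hb) (hcont'.mono (hJ.uIcc_subset ha hb)).intervalIntegrable
  · intro h
    exact convexOn_of_mul_apply_midpoint_le_intervalIntegral hJ hcont' fun a ha b hb hab ↦
      (hslope a ha b hb hab).1 (h a b ha hb hab)

theorem stmt10 (I : Set ℝ) (hI : I.OrdConnected) (f f' : ℝ → ℝ)
    (hcont : ContinuousOn f I)
    (hderiv : ∀ x ∈ interior I, HasDerivAt f (f' x) x)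
    (hcont' : ContinuousOn f' (interior I)) :
    ConvexOn ℝ (interior I) f' ↔
      ∀ a b : ℝ, a ∈ interior I → b ∈ interior I → a < b →
        f' ((a + b) / 2) ≤ (f b - f a) / (b - a) :=
  stmt10_general I hI f f' hderiv hcont'
end

section
/- Let f : I → ℝ be continuous on I and C¹ on int I. Then f' is convex on int I if and only if (f(b)-f(a))/(b-a) ≤ (1/2)((f'(a)+f'(b))/2 + f'((a+b)/2)) for all a < b in int I. -/
/-!
By the fundamental theorem of calculus the inequality says that the integral of `g = f'` over
`[a, b]` is at most the two-panel trapezoid rule `(b - a) * (g a / 4 + g m / 2 + g b / 4)`,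
`m = (a + b) / 2`. A convex `g` satisfies this by the Hermite–Hadamard inequality on both halves.

Conversely, the bound is linear and invariant under translation, so it passes to the sliding
integral `t ↦ ∫ s in 0..h, g (t + s)`. Applying this twice produces a `C²` function whose second
derivative at `t` is the second difference `g t - 2 * g (t + h) + g (t + 2 * h)`. A `C²` function
obeying the bound has nonnegative second derivative, because the rule underestimates integrals of
concave functions but overestimates that of a parabola. Hence `g` is midpoint convex and, being
continuous, convex.
-/

open Set Filter Topology MeasureTheory

-- A positive maximum of `p` would have a rightmost maximum point `c ∈ (x, y)`, and the midpoint
-- inequality around `c` would force the maximum to be attained right of `c` as well.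
lemma nonpos_of_midpoint_convex {p : ℝ → ℝ} {x y : ℝ} (hp : ContinuousOn p (Icc x y))
    (hmid : ∀ a ∈ Icc x y, ∀ b ∈ Icc x y, a < b → 2 * p ((a + b) / 2) ≤ p a + p b)
    (hx : p x ≤ 0) (hy : p y ≤ 0) {z : ℝ} (hz : z ∈ Icc x y) : p z ≤ 0 := by
  by_contra! hpz
  obtain ⟨c₀, hc₀, hmax⟩ := isCompact_Icc.exists_isMaxOn ⟨z, hz⟩ hp
  set K := Icc x y ∩ p ⁻¹' {p c₀}
  have hK : IsCompact K := isCompact_Icc.of_isClosed_subset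
    (hp.preimage_isClosed_of_isClosed isClosed_Icc isClosed_singleton) inter_subset_left
  obtain ⟨c, ⟨hc, hpc : p c = p c₀⟩, hcK⟩ := hK.exists_isGreatest ⟨c₀, hc₀, rfl⟩
  have hM : 0 < p c := hpc ▸ hpz.trans_le (hmax hz)
  have hxc : x < c := lt_of_le_of_ne hc.1 fun h ↦ by rw [← h] at hM; linarith
  have hcy : c < y := lt_of_le_of_ne hc.2 fun h ↦ by rw [h] at hM; linarith
  set ρ := min (c - x) (y - c)
  have hρ : 0 < ρ := lt_min (by linarith) (by linarith)
  have hl : c - ρ ∈ Icc x y := ⟨by linarith [min_le_left (c - x) (y - c)], by linarith⟩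
  have hr : c + ρ ∈ Icc x y := ⟨by linarith, by linarith [min_le_right (c - x) (y - c)]⟩
  have hmidc := hmid _ hl _ hr (by linarith)
  rw [show (c - ρ + (c + ρ)) / 2 = c by ring] at hmidc
  have hrK : c + ρ ∈ K := ⟨hr, le_antisymm (hmax hr) (by linarith [isMaxOn_iff.1 hmax _ hl])⟩
  linarith [hcK hrK]

lemma convexOn_of_midpoint {g : ℝ → ℝ} {s : Set ℝ} (hs : s.OrdConnected) (hg : ContinuousOn g s)
    (hmid : ∀ a ∈ s, ∀ b ∈ s, a < b → 2 * g ((a + b) / 2) ≤ g a + g b) : ConvexOn ℝ s g := by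
  refine convexOn_of_slope_mono_adjacent hs.convex fun {x y z} hx hz hxy hyz ↦ ?_
  have hxz : 0 < z - x := by linarith
  set σ := (g z - g x) / (z - x)
  have hchord : g y - (g x + σ * (y - x)) ≤ 0 := by
    refine nonpos_of_midpoint_convex (p := fun t ↦ g t - (g x + σ * (t - x)))
      ((hg.mono (hs.out hx hz)).sub (by fun_prop)) (fun a ha b hb hab ↦ ?_) (by simp)
      (le_of_eq (by simp only [σ]; field_simp; ring)) ⟨hxy.le, hyz.le⟩
    linarith [hmid a (hs.out hx hz ha) b (hs.out hx hz hb) hab]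
  have hσ : σ * (z - x) = g z - g x := by simp only [σ]; field_simp
  rw [div_le_div_iff₀ (by linarith) (by linarith)]
  nlinarith

lemma ConvexOn.add_reflect_le {w : ℝ → ℝ} {a b x : ℝ} (hw : ConvexOn ℝ (Icc a b) w)
    (hx : x ∈ Icc a b) : w x + w (a + b - x) ≤ w a + w b := by
  rcases hx.1.eq_or_lt with rfl | hax
  · simp
  rcases hx.2.eq_or_lt with rfl | hxb
  · simp [add_comm]
  have ha : a ∈ Icc a b := left_mem_Icc.2 (hax.trans hxb).le
  have hb : b ∈ Icc a b := right_mem_Icc.2 (hax.trans hxb).le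
  have h₁ := hw.secant_mono_aux1 ha hb hax hxb
  have h₂ := hw.secant_mono_aux1 ha hb (show a < a + b - x by linarith) (by linarith)
  have hba : 0 < b - a := by linarith
  nlinarith

lemma ConvexOn.integral_le_trapezoid {w : ℝ → ℝ} {a b : ℝ} (hab : a ≤ b)
    (hw : ConvexOn ℝ (Icc a b) w) (hc : ContinuousOn w (Icc a b)) :
    ∫ x in a..b, w x ≤ (b - a) * (w a + w b) / 2 := by
  have hint : IntervalIntegrable w volume a b := hc.intervalIntegrable_of_Icc hab
  have hint' : IntervalIntegrable (fun x ↦ w (a + b - x)) volume a b := by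
    simpa using (hint.comp_sub_left (a + b)).symm
  have hrefl : ∫ x in a..b, w (a + b - x) = ∫ x in a..b, w x := by
    rw [intervalIntegral.integral_comp_sub_left]; simp
  have hsum : ∫ x in a..b, (w x + w (a + b - x)) ≤ ∫ x in a..b, (w a + w b) :=
    intervalIntegral.integral_mono_on hab (hint.add hint') intervalIntegrable_const
      fun x hx ↦ hw.add_reflect_le hx
  rw [intervalIntegral.integral_add hint hint', hrefl, intervalIntegral.integral_const,
    smul_eq_mul] at hsum
  linarith

def TrapezoidBoundOn (g : ℝ → ℝ) (s : Set ℝ) : Prop :=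
  ∀ a ∈ s, ∀ b ∈ s, a ≤ b →
    ∫ x in a..b, g x ≤ (b - a) * ((g a + g b) / 4 + g ((a + b) / 2) / 2)

namespace TrapezoidBoundOn

lemma mono {g : ℝ → ℝ} {s t : Set ℝ} (hQ : TrapezoidBoundOn g s) (hts : t ⊆ s) :
    TrapezoidBoundOn g t :=
  fun a ha b hb hab ↦ hQ a (hts ha) b (hts hb) hab

lemma congr {g g' : ℝ → ℝ} {s : Set ℝ} (hQ : TrapezoidBoundOn g s) (hs : s.OrdConnected)
    (heq : EqOn g g' s) : TrapezoidBoundOn g' s := by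
  intro a ha b hb hab
  have hm : (a + b) / 2 ∈ s := hs.out ha hb ⟨by linarith, by linarith⟩
  rw [← heq ha, ← heq hb, ← heq hm, ← intervalIntegral.integral_congr fun x hx ↦
    heq (hs.out ha hb (by rwa [uIcc_of_le hab] at hx))]
  exact hQ a ha b hb hab

end TrapezoidBoundOn

lemma ConvexOn.trapezoidBoundOn {w : ℝ → ℝ} {s : Set ℝ} (hs : s.OrdConnected)
    (hw : ConvexOn ℝ s w) (hc : ContinuousOn w s) : TrapezoidBoundOn w s := by
  intro a ha b hb hab
  set m := (a + b) / 2 with hm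
  have ham : a ≤ m := by linarith
  have hmb : m ≤ b := by linarith
  have hsub₁ : Icc a m ⊆ s := hs.out ha (hs.out ha hb ⟨ham, hmb⟩)
  have hsub₂ : Icc m b ⊆ s := hs.out (hs.out ha hb ⟨ham, hmb⟩) hb
  have h₁ := (hw.subset hsub₁ (convex_Icc _ _)).integral_le_trapezoid ham (hc.mono hsub₁)
  have h₂ := (hw.subset hsub₂ (convex_Icc _ _)).integral_le_trapezoid hmb (hc.mono hsub₂)
  rw [← intervalIntegral.integral_add_adjacent_intervals
    ((hc.mono hsub₁).intervalIntegrable_of_Icc ham) ((hc.mono hsub₂).intervalIntegrable_of_Icc hmb)]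
  rw [show m - a = (b - a) / 2 by linarith] at h₁
  rw [show b - m = (b - a) / 2 by linarith] at h₂
  linarith

lemma integral_sub_sq_symm (c r : ℝ) : ∫ x in c - r..c + r, (x - c) ^ 2 = 2 * r ^ 3 / 3 := by
  rw [intervalIntegral.integral_comp_sub_right (· ^ 2), integral_pow]
  ring

lemma TrapezoidBoundOn.deriv2_nonneg {φ φ' φ'' : ℝ → ℝ} {s : Set ℝ} {c : ℝ}
    (hQ : TrapezoidBoundOn φ s) (hs : s ∈ 𝓝 c) (hφ : ∀ x ∈ s, HasDerivAt φ (φ' x) x)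
    (hφ' : ∀ x ∈ s, HasDerivAt φ' (φ'' x) x) (hφ'' : ContinuousAt φ'' c) : 0 ≤ φ'' c := by
  by_contra! hneg
  set κ := -φ'' c / 2 with hκ_def
  have hκ : 0 < κ := by linarith
  obtain ⟨r, hr, hrs⟩ := (nhds_basis_Icc_pos c).mem_iff.1
    (inter_mem hs (hφ''.eventually (gt_mem_nhds (show φ'' c < φ'' c + κ by linarith))))
  set v := fun x ↦ φ x + κ / 2 * (x - c) ^ 2
  have hv : ∀ x ∈ s, HasDerivAt v (φ' x + κ * (x - c)) x := fun x hx ↦ by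
    refine ((hφ x hx).add
      ((((hasDerivAt_id' x).sub_const c).pow 2).const_mul (κ / 2))).congr_deriv ?_
    ring
  have hv' : ∀ x ∈ s, HasDerivAt (fun x ↦ φ' x + κ * (x - c)) (φ'' x + κ) x := fun x hx ↦ by
    refine ((hφ' x hx).add (((hasDerivAt_id' x).sub_const c).const_mul κ)).congr_deriv ?_
    ring
  have hvc : ContinuousOn v (Icc (c - r) (c + r)) :=
    fun x hx ↦ (hv x (hrs hx).1).continuousAt.continuousWithinAt
  have hconc : ConcaveOn ℝ (Icc (c - r) (c + r)) v := by
    refine concaveOn_of_hasDerivWithinAt2_nonpos (convex_Icc _ _) hvc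
      (fun x hx ↦ (hv x (hrs (interior_subset hx)).1).hasDerivWithinAt)
      (fun x hx ↦ (hv' x (hrs (interior_subset hx)).1).hasDerivWithinAt) fun x hx ↦ ?_
    have := (hrs (interior_subset hx)).2
    simp only [mem_ofPred_eq] at this
    linarith
  -- The rule underestimates the integral of the concave `v`, but overestimates the integral
  -- `2 r ^ 3 / 3` of `(x - c) ^ 2` by `r ^ 3 / 3`.
  have hv_ge := hconc.neg.trapezoidBoundOn ordConnected_Icc hvc.neg (c - r) ⟨le_rfl, by linarith⟩
    (c + r) ⟨by linarith, le_rfl⟩ (by linarith)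
  have hφ_le := hQ (c - r) (hrs ⟨le_rfl, by linarith⟩).1 (c + r) (hrs ⟨by linarith, le_rfl⟩).1
    (by linarith)
  have hφint : IntervalIntegrable φ volume (c - r) (c + r) :=
    ContinuousOn.intervalIntegrable_of_Icc (by linarith)
      fun x hx ↦ (hφ x (hrs hx).1).continuousAt.continuousWithinAt
  simp only [Pi.neg_apply] at hv_ge
  rw [intervalIntegral.integral_neg, intervalIntegral.integral_add hφint
    ((by fun_prop : Continuous fun x ↦ κ / 2 * (x - c) ^ 2).intervalIntegrable _ _),
    intervalIntegral.integral_const_mul, integral_sub_sq_symm] at hv_ge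
  simp only [v, show c - r + (c + r) = 2 * c by ring] at hv_ge hφ_le
  have hκr := mul_pos hκ (pow_pos hr 3)
  ring_nf at hv_ge hφ_le hκr
  linarith

noncomputable def slidingIntegral (h : ℝ) (g : ℝ → ℝ) (t : ℝ) : ℝ := ∫ s in 0..h, g (t + s)

lemma hasDerivAt_slidingIntegral {g : ℝ → ℝ} (hg : Continuous g) (h t : ℝ) :
    HasDerivAt (slidingIntegral h g) (g (t + h) - g t) t := by
  have hF : slidingIntegral h g = fun t ↦ (∫ x in 0..t + h, g x) - ∫ x in 0..t, g x := by
    ext t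
    rw [slidingIntegral, intervalIntegral.integral_comp_add_left, add_zero,
      intervalIntegral.integral_interval_sub_left (hg.intervalIntegrable _ _)
        (hg.intervalIntegrable _ _)]
  rw [hF]
  exact ((hg.integral_hasStrictDerivAt 0 (t + h)).hasDerivAt.comp_add_const t h).sub
    (hg.integral_hasStrictDerivAt 0 t).hasDerivAt

lemma continuous_slidingIntegral {g : ℝ → ℝ} (hg : Continuous g) (h : ℝ) :
    Continuous (slidingIntegral h g) :=
  continuous_iff_continuousAt.2 fun t ↦ (hasDerivAt_slidingIntegral hg h t).continuousAt

lemma TrapezoidBoundOn.slidingIntegral_Icc {g : ℝ → ℝ} {h p q : ℝ} (hg : Continuous g)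
    (hh : 0 ≤ h) (hQ : TrapezoidBoundOn g (Icc p q)) :
    TrapezoidBoundOn (slidingIntegral h g) (Icc p (q - h)) := by
  intro a ha b hb hab
  have hint : ∀ c, IntervalIntegrable (fun s ↦ g (c + s)) volume 0 h :=
    fun c ↦ (hg.comp (continuous_const_add c)).intervalIntegrable _ _
  have hswap : ∫ t in a..b, slidingIntegral h g t = ∫ s in 0..h, ∫ t in a..b, g (t + s) :=
    intervalIntegral_intervalIntegral_swap
      (((hg.comp continuous_add).continuousOn.integrableOn_compact
        (isCompact_uIcc.prod isCompact_uIcc)).mono_set (prod_mono uIoc_subset_uIcc uIoc_subset_uIcc))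
  rw [hswap]
  calc ∫ s in 0..h, ∫ t in a..b, g (t + s)
      ≤ ∫ s in 0..h, (b - a) * ((g (a + s) + g (b + s)) / 4 + g ((a + b) / 2 + s) / 2) := by
        refine intervalIntegral.integral_mono_on hh ?_ ?_ fun s hs ↦ ?_
        · exact (intervalIntegral.continuous_parametric_intervalIntegral_of_continuous'
            (f := fun s t ↦ g (t + s)) (by fun_prop) a b).intervalIntegrable _ _
        · exact (by fun_prop : Continuous fun s ↦ (b - a) *
            ((g (a + s) + g (b + s)) / 4 + g ((a + b) / 2 + s) / 2)).intervalIntegrable _ _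
        · rw [intervalIntegral.integral_comp_add_right]
          convert hQ (a + s) ⟨by linarith [ha.1, hs.1], by linarith [ha.2, hs.2]⟩ (b + s)
            ⟨by linarith [hb.1, hs.1], by linarith [hb.2, hs.2]⟩ (by linarith) using 2 <;> ring_nf
    _ = (b - a) * ((slidingIntegral h g a + slidingIntegral h g b) / 4 +
          slidingIntegral h g ((a + b) / 2) / 2) := by
        simp only [slidingIntegral]
        rw [intervalIntegral.integral_const_mul, intervalIntegral.integral_add
          (((hint a).add (hint b)).div_const _) ((hint _).div_const _),
          intervalIntegral.integral_div, intervalIntegral.integral_div,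
          intervalIntegral.integral_add (hint a) (hint b)]

-- With window `h = (b - a) / 2`, the second derivative at `a` of the twice-iterated sliding
-- integral of `g` is `g a - 2 * g ((a + b) / 2) + g b`.
lemma TrapezoidBoundOn.midpoint_le_of_continuous {g : ℝ → ℝ} {p q a b : ℝ} (hg : Continuous g)
    (hQ : TrapezoidBoundOn g (Icc p q)) (hpa : p < a) (hab : a < b) (hbq : b < q) :
    2 * g ((a + b) / 2) ≤ g a + g b := by
  set h := (b - a) / 2 with h_def
  have hh : 0 ≤ h := by linarith
  set G := slidingIntegral h g
  have hG : ∀ t, HasDerivAt G (g (t + h) - g t) t := hasDerivAt_slidingIntegral hg h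
  have hGc : Continuous G := continuous_slidingIntegral hg h
  have hG' : ∀ t, HasDerivAt (fun t ↦ G (t + h) - G t)
      (g (t + h + h) - g (t + h) - (g (t + h) - g t)) t :=
    fun t ↦ ((hG (t + h)).comp_add_const t h).sub (hG t)
  have hQG : TrapezoidBoundOn (slidingIntegral h G) (Icc p (q - h - h)) :=
    (hQ.slidingIntegral_Icc hg hh).slidingIntegral_Icc hGc hh
  have := hQG.deriv2_nonneg (Icc_mem_nhds hpa (by linarith))
    (fun t _ ↦ hasDerivAt_slidingIntegral hGc h t) (fun t _ ↦ hG' t) (by fun_prop)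
  rw [show a + h = (a + b) / 2 by ring, show (a + b) / 2 + h = b by ring] at this
  linarith

lemma TrapezoidBoundOn.midpoint_le {g : ℝ → ℝ} {s : Set ℝ} {a b : ℝ} (hQ : TrapezoidBoundOn g s)
    (hs : IsOpen s) (hs' : s.OrdConnected) (hg : ContinuousOn g s) (ha : a ∈ s) (hb : b ∈ s)
    (hab : a < b) : 2 * g ((a + b) / 2) ≤ g a + g b := by
  obtain ⟨ε, hε, hεs⟩ := (nhds_basis_Icc_pos a).mem_iff.1 (hs.mem_nhds ha)
  obtain ⟨δ, hδ, hδs⟩ := (nhds_basis_Icc_pos b).mem_iff.1 (hs.mem_nhds hb)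
  have hpq : a - ε ≤ b + δ := by linarith
  have hsub : Icc (a - ε) (b + δ) ⊆ s :=
    hs'.out (hεs ⟨le_rfl, by linarith⟩) (hδs ⟨by linarith, le_rfl⟩)
  set g' := fun x ↦ g (projIcc (a - ε) (b + δ) hpq x)
  have heq : EqOn g' g (Icc (a - ε) (b + δ)) := fun x hx ↦ by simp [g', projIcc_of_mem hpq hx]
  have hg' : Continuous g' := (hg.mono hsub).comp_continuous
    (continuous_subtype_val.comp continuous_projIcc) fun x ↦ (projIcc _ _ hpq x).2
  have := ((hQ.mono hsub).congr ordConnected_Icc heq.symm).midpoint_le_of_continuous hg'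
    (by linarith : a - ε < a) hab (by linarith : b < b + δ)
  rwa [heq ⟨by linarith, by linarith⟩, heq ⟨by linarith, by linarith⟩,
    heq ⟨by linarith, by linarith⟩] at this

theorem convexOn_iff_trapezoidBoundOn {g : ℝ → ℝ} {s : Set ℝ} (hs : IsOpen s)
    (hs' : s.OrdConnected) (hg : ContinuousOn g s) :
    ConvexOn ℝ s g ↔ TrapezoidBoundOn g s :=
  ⟨fun h ↦ h.trapezoidBoundOn hs' hg, fun hQ ↦
    convexOn_of_midpoint hs' hg fun _ ha _ hb hab ↦ hQ.midpoint_le hs hs' hg ha hb hab⟩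

theorem stmt11_general (I : Set ℝ) (hI : I.OrdConnected) (f f' : ℝ → ℝ)
    (hderiv : ∀ x ∈ interior I, HasDerivAt f (f' x) x)
    (hcont' : ContinuousOn f' (interior I)) :
    ConvexOn ℝ (interior I) f' ↔
      ∀ a b : ℝ, a ∈ interior I → b ∈ interior I → a < b →
        (f b - f a) / (b - a) ≤
          (1 / 2) * ((f' a + f' b) / 2 + f' ((a + b) / 2)) := by
  have hJ : (interior I).OrdConnected := hI.interior
  have hFTC : ∀ a ∈ interior I, ∀ b ∈ interior I, a ≤ b → ∫ x in a..b, f' x = f b - f a := by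
    intro a ha b hb hab
    have hsub : uIcc a b ⊆ interior I := by rw [uIcc_of_le hab]; exact hJ.out ha hb
    exact intervalIntegral.integral_eq_sub_of_hasDerivAt (fun x hx ↦ hderiv x (hsub hx))
      (hcont'.mono hsub).intervalIntegrable
  rw [convexOn_iff_trapezoidBoundOn isOpen_interior hJ hcont']
  constructor
  · intro hQ a b ha hb hab
    have := hQ a ha b hb hab.le
    rw [hFTC a ha b hb hab.le] at this
    rw [div_le_iff₀ (sub_pos.2 hab)]
    linarith
  · intro h a ha b hb hab
    rcases hab.eq_or_lt with rfl | hlt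
    · simp
    have := h a b ha hb hlt
    rw [div_le_iff₀ (sub_pos.2 hlt)] at this
    rw [hFTC a ha b hb hab]
    linarith

theorem stmt11 (I : Set ℝ) (hI : I.OrdConnected) (f f' : ℝ → ℝ)
    (hcont : ContinuousOn f I)
    (hderiv : ∀ x ∈ interior I, HasDerivAt f (f' x) x)
    (hcont' : ContinuousOn f' (interior I)) :
    ConvexOn ℝ (interior I) f' ↔
      ∀ a b : ℝ, a ∈ interior I → b ∈ interior I → a < b →
        (f b - f a) / (b - a) ≤
          (1 / 2) * ((f' a + f' b) / 2 + f' ((a + b) / 2)) :=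
  stmt11_general I hI f f' hderiv hcont'
end

section
/- If f is a continuous 3-convex function on an interval I, then f is differentiable on the interior of I, and for every a in int I and every x ≥ a in I, f(x) ≥ f(a) + (x-a) f'(a) + ((x-a)²/2) f''₊(a), where f''₊(a) is the right second derivative (right derivative of the convex function f'). -/
/-!
For `c ∈ I` the slope `t ↦ [c, t; f]` has second divided differences `±[c, x, y, z; f] ≥ 0`,
so it is convex on either side of `c`. Writing `f t = f c + (t - c) [c, t; f]` with `c` to the
left of `a`, and then to the right of `a`, gives both inequalities between the one-sided
derivatives of `f` at `a`, hence `f` is differentiable there. Three-point divided differences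
of `f` increase when all three points are shifted to the right, so the difference quotients
`t ↦ (f (t + h) - f t) / h` are convex, and so is their limit `f'`. Convexity of `f'` gives
`f' t ≥ f' a + (t - a) f''₊(a)` for `t > a`, and integrating this bound once yields the claim.
-/

noncomputable def divDiff3 (f : ℝ → ℝ) (x0 x1 x2 x3 : ℝ) : ℝ :=
  f x0 / ((x0 - x1) * (x0 - x2) * (x0 - x3)) +
  f x1 / ((x1 - x0) * (x1 - x2) * (x1 - x3)) +
  f x2 / ((x2 - x0) * (x2 - x1) * (x2 - x3)) +
  f x3 / ((x3 - x0) * (x3 - x1) * (x3 - x2))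

open Set Filter Topology

noncomputable def divDiff2 (f : ℝ → ℝ) (x y z : ℝ) : ℝ :=
  f x / ((x - y) * (x - z)) + f y / ((y - x) * (y - z)) + f z / ((z - x) * (z - y))

def ThreeConvexOn (I : Set ℝ) (f : ℝ → ℝ) : Prop :=
  ∀ x0 x1 x2 x3 : ℝ, x0 ∈ I → x1 ∈ I → x2 ∈ I → x3 ∈ I →
    x0 < x1 → x1 < x2 → x2 < x3 → 0 ≤ divDiff3 f x0 x1 x2 x3

section DividedDifferences

variable (f : ℝ → ℝ) {c p q r s : ℝ}

theorem slope_sub_slope_eq_mul_divDiff2 (hpq : p ≠ q) (hpr : p ≠ r) (hqr : q ≠ r) :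
    slope f q r - slope f p q = (r - p) * divDiff2 f p q r := by
  simp only [slope_def_field, divDiff2]
  field_simp
  ring

theorem divDiff2_slope (hcp : c ≠ p) (hcq : c ≠ q) (hcr : c ≠ r)
    (hpq : p ≠ q) (hpr : p ≠ r) (hqr : q ≠ r) :
    divDiff2 (slope f c) p q r = divDiff3 f c p q r := by
  simp only [slope_def_field, divDiff2, divDiff3]
  field_simp
  ring

theorem divDiff3_rotate : divDiff3 f p q r s = divDiff3 f q r s p := by
  simp only [divDiff3]
  ring

theorem divDiff2_sub_divDiff2_right (hpq : p ≠ q) (hpr : p ≠ r) (hps : p ≠ s)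
    (hqr : q ≠ r) (hqs : q ≠ s) (hrs : r ≠ s) :
    divDiff2 f p q s - divDiff2 f p q r = (s - r) * divDiff3 f p q r s := by
  simp only [divDiff2, divDiff3]
  field_simp
  ring

theorem divDiff2_sub_divDiff2_mid (hpq : p ≠ q) (hpr : p ≠ r) (hps : p ≠ s)
    (hqr : q ≠ r) (hqs : q ≠ s) (hrs : r ≠ s) :
    divDiff2 f p r s - divDiff2 f p q s = (r - q) * divDiff3 f p q r s := by
  simp only [divDiff2, divDiff3]
  field_simp
  ring

theorem divDiff2_sub_divDiff2_left (hpq : p ≠ q) (hpr : p ≠ r) (hps : p ≠ s)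
    (hqr : q ≠ r) (hqs : q ≠ s) (hrs : r ≠ s) :
    divDiff2 f q r s - divDiff2 f p r s = (q - p) * divDiff3 f p q r s := by
  simp only [divDiff2, divDiff3]
  field_simp
  ring

theorem divDiff2_forwardDiffQuot (h : ℝ) :
    divDiff2 (fun t => h⁻¹ * (f (t + h) - f t)) p q r =
      h⁻¹ * (divDiff2 f (p + h) (q + h) (r + h) - divDiff2 f p q r) := by
  simp only [divDiff2]
  ring

end DividedDifferences

theorem convexOn_of_divDiff2_nonneg {s : Set ℝ} {g : ℝ → ℝ} (hs : s.OrdConnected)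
    (hg : ∀ x ∈ s, ∀ y ∈ s, ∀ z ∈ s, x < y → y < z → 0 ≤ divDiff2 g x y z) :
    ConvexOn ℝ s g := by
  refine convexOn_of_slope_mono_adjacent hs.convex fun {x y z} hx hz hxy hyz => ?_
  have hy : y ∈ s := hs.out hx hz ⟨hxy.le, hyz.le⟩
  have key := slope_sub_slope_eq_mul_divDiff2 g hxy.ne (hxy.trans hyz).ne hyz.ne
  simp only [slope_def_field] at key
  nlinarith [hg x hx y hy z hz hxy hyz, hxy.trans hyz]

theorem convexOn_of_tendsto {ι E : Type*} [AddCommGroup E] [Module ℝ E] {l : Filter ι} [l.NeBot]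
    {s : Set E} {t : ι → Set E} {F : ι → E → ℝ} {f : E → ℝ} (hs : Convex ℝ s)
    (hF : ∀ᶠ n in l, ConvexOn ℝ (t n) (F n)) (hst : ∀ x ∈ s, ∀ᶠ n in l, x ∈ t n)
    (hlim : ∀ x ∈ s, Tendsto (fun n => F n x) l (𝓝 (f x))) : ConvexOn ℝ s f := by
  refine ⟨hs, fun x hx y hy a b ha hb hab => ?_⟩
  refine le_of_tendsto_of_tendsto (hlim _ (hs hx hy ha hb hab))
    (((hlim x hx).const_smul a).add ((hlim y hy).const_smul b)) ?_
  filter_upwards [hF, hst x hx, hst y hy] with n hn hxn hyn using hn.2 hxn hyn ha hb hab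

theorem hasDerivWithinAt_of_hasDerivWithinAt_slope {f : ℝ → ℝ} {s : Set ℝ} {c a d : ℝ}
    (h : HasDerivWithinAt (slope f c) d s a) :
    HasDerivWithinAt f (slope f c a + (a - c) * d) s a := by
  have key : HasDerivWithinAt (fun t => (t - c) * slope f c t + f c)
      (1 * slope f c a + (a - c) * d) s a :=
    (((hasDerivWithinAt_id a s).sub_const c).mul h).add_const (f c)
  have hf : (fun t => (t - c) * slope f c t + f c) = f :=
    funext fun t => by simpa using sub_smul_slope_vadd f c t
  rwa [hf, one_mul] at key

theorem exists_hasDerivWithinAt_Iio_Ioi_of_convexOn_slope {f : ℝ → ℝ} {s : Set ℝ} {c a : ℝ}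
    (hg : ConvexOn ℝ s (slope f c)) (ha : a ∈ interior s) :
    ∃ ℓ r, HasDerivWithinAt f ℓ (Iio a) a ∧ HasDerivWithinAt f r (Ioi a) a ∧
      0 ≤ (a - c) * (r - ℓ) := by
  refine ⟨_, _, hasDerivWithinAt_of_hasDerivWithinAt_slope
    (hg.hasDerivWithinAt_leftDeriv_of_mem_interior ha), hasDerivWithinAt_of_hasDerivWithinAt_slope
    (hg.hasDerivWithinAt_rightDeriv_of_mem_interior ha), ?_⟩
  have hLR := hg.leftDeriv_le_rightDeriv_of_mem_interior ha
  nlinarith [sq_nonneg (a - c)]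

/-- A point `u` to the left of `a` forces `f'₋(a) ≤ f'₊(a)`, a point `v` to the right forces
`f'₊(a) ≤ f'₋(a)`. -/
theorem differentiableAt_of_convexOn_slope {f : ℝ → ℝ} {s : Set ℝ} {u v a : ℝ}
    (hu : ConvexOn ℝ s (slope f u)) (hv : ConvexOn ℝ s (slope f v)) (ha : a ∈ interior s)
    (hua : u < a) (hav : a < v) : DifferentiableAt ℝ f a := by
  obtain ⟨ℓ, r, hℓ, hr, hur⟩ := exists_hasDerivWithinAt_Iio_Ioi_of_convexOn_slope hu ha
  obtain ⟨ℓ', r', hℓ', hr', hvr⟩ := exists_hasDerivWithinAt_Iio_Ioi_of_convexOn_slope hv ha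
  have hℓℓ' : ℓ = ℓ' := (uniqueDiffWithinAt_Iio a).eq_deriv _ hℓ hℓ'
  have hrr' : r = r' := (uniqueDiffWithinAt_Ioi a).eq_deriv _ hr hr'
  have hrℓ : r = ℓ := by nlinarith
  rw [hrℓ, hasDerivWithinAt_iff_tendsto_slope' self_notMem_Ioi] at hr
  rw [hasDerivWithinAt_iff_tendsto_slope' self_notMem_Iio] at hℓ
  exact (hasDerivAt_iff_tendsto_slope_left_right.2 ⟨hℓ, hr⟩).differentiableAt

theorem quadratic_le_image_of_linear_le_deriv {f f' : ℝ → ℝ} {a b c D : ℝ} (hab : a ≤ b)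
    (hf : ContinuousOn f (Icc a b)) (hf' : ∀ t ∈ Ioo a b, HasDerivAt f (f' t) t)
    (hbound : ∀ t ∈ Ioo a b, c + (t - a) * D ≤ f' t) :
    f a + (b - a) * c + (b - a) ^ 2 / 2 * D ≤ f b := by
  have hq (t : ℝ) :
      HasDerivAt (fun t => (t - a) * c + (t - a) ^ 2 / 2 * D) (c + (t - a) * D) t := by
    have h1 : HasDerivAt (fun t => t - a) 1 t := (hasDerivAt_id' t).sub_const a
    exact ((h1.mul_const c).add (((h1.pow 2).div_const 2).mul_const D)).congr_deriv (by ring)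
  have hmono : MonotoneOn (fun t => f t - ((t - a) * c + (t - a) ^ 2 / 2 * D)) (Icc a b) := by
    refine monotoneOn_of_hasDerivWithinAt_nonneg (f' := fun t => f' t - (c + (t - a) * D))
      (convex_Icc a b) (hf.sub (by fun_prop)) (fun t ht => ?_) (fun t ht => ?_) <;>
      rw [interior_Icc] at ht
    · exact ((hf' t ht).sub (hq t)).hasDerivWithinAt
    · exact sub_nonneg.2 (hbound t ht)
  have := hmono (left_mem_Icc.2 hab) (right_mem_Icc.2 hab) hab
  simp only [sub_self, zero_mul, ne_eq, OfNat.ofNat_ne_zero, not_false_eq_true, zero_pow,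
    zero_div, add_zero, sub_zero] at this
  linarith

namespace ThreeConvexOn

variable {I : Set ℝ} {f : ℝ → ℝ}

theorem divDiff2_le_divDiff2 (hf : ThreeConvexOn I f) {p q r s : ℝ} (hp : p ∈ I) (hq : q ∈ I)
    (hr : r ∈ I) (hs : s ∈ I) (hpq : p < q) (hqr : q < r) (hrs : r < s) :
    divDiff2 f p q r ≤ divDiff2 f p q s ∧ divDiff2 f p q s ≤ divDiff2 f p r s ∧
      divDiff2 f p r s ≤ divDiff2 f q r s := by
  have hpr := hpq.trans hqr
  have hqs := hqr.trans hrs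
  have hps := hpr.trans hrs
  have h3 := hf p q r s hp hq hr hs hpq hqr hrs
  refine ⟨?_, ?_, ?_⟩ <;> rw [← sub_nonneg]
  · rw [divDiff2_sub_divDiff2_right f hpq.ne hpr.ne hps.ne hqr.ne hqs.ne hrs.ne]
    exact mul_nonneg (sub_nonneg.2 hrs.le) h3
  · rw [divDiff2_sub_divDiff2_mid f hpq.ne hpr.ne hps.ne hqr.ne hqs.ne hrs.ne]
    exact mul_nonneg (sub_nonneg.2 hqr.le) h3
  · rw [divDiff2_sub_divDiff2_left f hpq.ne hpr.ne hps.ne hqr.ne hqs.ne hrs.ne]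
    exact mul_nonneg (sub_nonneg.2 hpq.le) h3

theorem divDiff2_le_shift (hf : ThreeConvexOn I f) {x y z h : ℝ} (hx : x ∈ I) (hy : y ∈ I)
    (hz : z ∈ I) (hxh : x + h ∈ I) (hyh : y + h ∈ I) (hzh : z + h ∈ I) (hxy : x < y)
    (hyz : y < z) (hh : 0 < h) :
    divDiff2 f x y z ≤ divDiff2 f (x + h) (y + h) (z + h) :=
  calc divDiff2 f x y z ≤ divDiff2 f x y (z + h) :=
        (hf.divDiff2_le_divDiff2 hx hy hz hzh hxy hyz (by linarith)).1
    _ ≤ divDiff2 f x (y + h) (z + h) :=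
        (hf.divDiff2_le_divDiff2 hx hy hyh hzh hxy (by linarith) (by linarith)).2.1
    _ ≤ divDiff2 f (x + h) (y + h) (z + h) :=
        (hf.divDiff2_le_divDiff2 hx hxh hyh hzh (by linarith) (by linarith) (by linarith)).2.2

theorem convexOn_forwardDiffQuot (hf : ThreeConvexOn I f) (hI : I.OrdConnected) {h : ℝ}
    (hh : 0 < h) : ConvexOn ℝ {t | t ∈ I ∧ t + h ∈ I} (fun t => h⁻¹ * (f (t + h) - f t)) := by
  have hconn : {t | t ∈ I ∧ t + h ∈ I}.OrdConnected :=
    ⟨fun x hx y hy t ht => ⟨hI.out hx.1 hy.1 ht,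
      hI.out hx.2 hy.2 ⟨by linarith [ht.1], by linarith [ht.2]⟩⟩⟩
  refine convexOn_of_divDiff2_nonneg hconn fun x hx y hy z hz hxy hyz => ?_
  rw [divDiff2_forwardDiffQuot]
  exact mul_nonneg (inv_nonneg.2 hh.le)
    (sub_nonneg.2 (hf.divDiff2_le_shift hx.1 hy.1 hz.1 hx.2 hy.2 hz.2 hxy hyz hh))

theorem convexOn_deriv (hf : ThreeConvexOn I f) (hI : I.OrdConnected) {f' : ℝ → ℝ}
    (hderiv : ∀ x ∈ interior I, HasDerivAt f (f' x) x) : ConvexOn ℝ (interior I) f' := by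
  refine convexOn_of_tendsto (l := 𝓝[>] (0 : ℝ)) hI.convex.interior
    (eventually_mem_nhdsWithin.mono fun h hh => hf.convexOn_forwardDiffQuot hI hh)
    (fun x hx => ?_) (fun x hx => by simpa only [smul_eq_mul] using
      (hderiv x hx).tendsto_slope_zero_right)
  have hshift : Tendsto (fun h => x + h) (𝓝[>] 0) (𝓝 x) :=
    ((continuous_const_add x).tendsto' 0 x (add_zero x)).mono_left nhdsWithin_le_nhds
  exact (hshift.eventually (mem_interior_iff_mem_nhds.1 hx)).mono fun h hh =>
    ⟨interior_subset hx, hh⟩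

theorem convexOn_slope (hf : ThreeConvexOn I f) {s : Set ℝ} {c : ℝ} (hs : s.OrdConnected)
    (hsI : s ⊆ I) (hc : c ∈ I) (hcs : c ∉ s) : ConvexOn ℝ s (slope f c) := by
  refine convexOn_of_divDiff2_nonneg hs fun x hx y hy z hz hxy hyz => ?_
  have hcx : c ≠ x := fun h => hcs (h ▸ hx)
  have hcy : c ≠ y := fun h => hcs (h ▸ hy)
  have hcz : c ≠ z := fun h => hcs (h ▸ hz)
  rw [divDiff2_slope f hcx hcy hcz hxy.ne (hxy.trans hyz).ne hyz.ne]
  rcases hcx.lt_or_gt with hcx' | hxc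
  · exact hf c x y z hc (hsI hx) (hsI hy) (hsI hz) hcx' hxy hyz
  · have hzc : z < c := lt_of_not_ge fun hcz => hcs (hs.out hx hz ⟨hxc.le, hcz⟩)
    rw [divDiff3_rotate]
    exact hf x y z c (hsI hx) (hsI hy) (hsI hz) hc hxy hyz hzc

theorem differentiableAt (hf : ThreeConvexOn I f) {a : ℝ} (ha : a ∈ interior I) :
    DifferentiableAt ℝ f a := by
  obtain ⟨u', v', ⟨hu'a, hav'⟩, hsub⟩ :=
    mem_nhds_iff_exists_Ioo_subset.1 (mem_interior_iff_mem_nhds.1 ha)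
  obtain ⟨u, hu'u, hua⟩ := exists_between hu'a
  obtain ⟨v, hav, hvv'⟩ := exists_between hav'
  have hsI : Ioo u v ⊆ I := (Ioo_subset_Ioo hu'u.le hvv'.le).trans hsub
  have huI : u ∈ I := hsub ⟨hu'u, hua.trans hav'⟩
  have hvI : v ∈ I := hsub ⟨hu'a.trans hav, hvv'⟩
  exact differentiableAt_of_convexOn_slope
    (hf.convexOn_slope ordConnected_Ioo hsI huI fun h => lt_irrefl u h.1)
    (hf.convexOn_slope ordConnected_Ioo hsI hvI fun h => lt_irrefl v h.2)
    (by rw [interior_Ioo]; exact ⟨hua, hav⟩) hua hav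

end ThreeConvexOn

theorem stmt13 (I : Set ℝ) (hI : I.OrdConnected) (f : ℝ → ℝ)
    (hcont : ContinuousOn f I)
    (hconv : ∀ x0 x1 x2 x3 : ℝ, x0 ∈ I → x1 ∈ I → x2 ∈ I → x3 ∈ I →
      x0 < x1 → x1 < x2 → x2 < x3 → 0 ≤ divDiff3 f x0 x1 x2 x3) :
    ∃ f' : ℝ → ℝ,
      (∀ a ∈ interior I, HasDerivAt f (f' a) a) ∧
      ∀ a ∈ interior I, ∀ D : ℝ, HasDerivWithinAt f' D (Set.Ioi a) a →
        ∀ x ∈ I, a ≤ x →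
          f a + (x - a) * f' a + ((x - a) ^ 2 / 2) * D ≤ f x := by
  have hf : ThreeConvexOn I f := hconv
  have hderiv : ∀ t ∈ interior I, HasDerivAt f (deriv f t) t :=
    fun t ht => (hf.differentiableAt ht).hasDerivAt
  refine ⟨deriv f, hderiv, fun a ha D hD x hx hax => ?_⟩
  have hIcc : Icc a x ⊆ I := hI.out (interior_subset ha) hx
  have hIoo : Ioo a x ⊆ interior I := interior_Icc (a := a) (b := x) ▸ interior_mono hIcc
  refine quadratic_le_image_of_linear_le_deriv hax (hcont.mono hIcc)
    (fun t ht => hderiv t (hIoo ht)) fun t ht => ?_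
  have hslope :=
    (hf.convexOn_deriv hI hderiv).le_slope_of_hasDerivWithinAt_Ioi ha (hIoo ht) ht.1 hD
  rw [slope_def_field, le_div_iff₀ (sub_pos.2 ht.1)] at hslope
  linarith
end

section
/- A continuous function f : I → ℝ is 3-convex if and only if for all a < b in I, (1/4) f(a) + (3/4) f((a+2b)/3) ≤ (1/(b-a)) ∫_a^b f(x) dx. -/
open Set Filter Topology

noncomputable def radauRemainder (g : ℝ → ℝ) (a b : ℝ) : ℝ :=
  (∫ x in a..b, g x) - (b - a) * (g a / 4 + 3 / 4 * g ((a + 2 * b) / 3))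

lemma divDiff3_eq_slope_slope (f : ℝ → ℝ) {x0 x1 x2 x3 : ℝ} (h01 : x0 ≠ x1) (h02 : x0 ≠ x2)
    (h03 : x0 ≠ x3) (h12 : x1 ≠ x2) (h13 : x1 ≠ x3) (h23 : x2 ≠ x3) :
    divDiff3 f x0 x1 x2 x3 =
      (slope (slope f x0) x2 x3 - slope (slope f x0) x1 x2) / (x3 - x1) := by
  simp only [divDiff3, slope_def_field]
  field_simp
  ring

lemma divDiff3_nonneg_iff {f : ℝ → ℝ} {x0 x1 x2 x3 : ℝ} (h01 : x0 < x1) (h12 : x1 < x2)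
    (h23 : x2 < x3) :
    0 ≤ divDiff3 f x0 x1 x2 x3 ↔ slope (slope f x0) x1 x2 ≤ slope (slope f x0) x2 x3 := by
  rw [divDiff3_eq_slope_slope f h01.ne (h01.trans h12).ne (h01.trans (h12.trans h23)).ne h12.ne
    (h12.trans h23).ne h23.ne, le_div_iff₀ (by linarith), zero_mul, sub_nonneg]

lemma convexOn_slope_iff_divDiff3_nonneg {f : ℝ → ℝ} {s : Set ℝ} (hs : Convex ℝ s) {a : ℝ}
    (ha : ∀ x ∈ s, a < x) :
    ConvexOn ℝ s (slope f a) ↔ ∀ x1 x2 x3, x1 ∈ s → x3 ∈ s → x1 < x2 → x2 < x3 →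
      0 ≤ divDiff3 f a x1 x2 x3 := by
  simp only [convexOn_iff_slope_mono_adjacent, hs, true_and, ← slope_def_field]
  exact forall₃_congr fun x y z => forall₄_congr fun hx _ hxy hyz =>
    (divDiff3_nonneg_iff (ha x hx) hxy hyz).symm

lemma ConvexOn.exists_affine_le_of_mem_interior {g : ℝ → ℝ} {s : Set ℝ} (hg : ConvexOn ℝ s g)
    {c : ℝ} (hc : c ∈ interior s) : ∃ k, ∀ x ∈ s, g c + k * (x - c) ≤ g x := by
  refine ⟨derivWithin g (Ioi c) c, fun x hx => ?_⟩
  rcases lt_trichotomy x c with hxc | rfl | hcx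
  · have h := (hg.slope_le_leftDeriv_of_mem_interior hx hc hxc).trans
      (hg.leftDeriv_le_rightDeriv_of_mem_interior hc)
    rw [slope_def_field, div_le_iff₀ (sub_pos.2 hxc)] at h
    linarith
  · simp
  · have h := hg.rightDeriv_le_slope_of_mem_interior hc hx hcx
    rw [slope_def_field, le_div_iff₀ (sub_pos.2 hcx)] at h
    linarith

lemma slope_eq_integral_deriv {G G' : ℝ → ℝ} (hG : ∀ x, HasDerivAt G (G' x) x)
    (hG' : Continuous G') {p x : ℝ} (hx : x ≠ p) :
    slope G p x = ∫ t in (0 : ℝ)..1, G' (p + (x - p) * t) := by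
  rw [intervalIntegral.integral_comp_add_mul _ (sub_ne_zero.2 hx), mul_zero, add_zero, mul_one,
    add_sub_cancel, intervalIntegral.integral_eq_sub_of_hasDerivAt (fun y _ => hG y)
      (hG'.intervalIntegrable _ _), slope_def_field, smul_eq_mul, inv_mul_eq_div]

lemma ConvexOn.integral_comp_segment {φ : ℝ → ℝ} {s : Set ℝ} (hφ : ConvexOn ℝ s φ)
    (hφc : Continuous φ) {p : ℝ} (hp : p ∈ s) :
    ConvexOn ℝ s fun x => ∫ t in (0 : ℝ)..1, φ (p + (x - p) * t) := by
  have hmem : ∀ x ∈ s, ∀ t ∈ Icc (0 : ℝ) 1, p + (x - p) * t ∈ s := fun x hx t ht => by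
    simpa [mul_comm] using hφ.1.add_smul_sub_mem hp hx ht
  refine ⟨hφ.1, fun x hx y hy a b ha hb hab => ?_⟩
  simp only [smul_eq_mul]
  rw [← intervalIntegral.integral_const_mul, ← intervalIntegral.integral_const_mul,
    ← intervalIntegral.integral_add (Continuous.intervalIntegrable (by fun_prop) _ _)
      (Continuous.intervalIntegrable (by fun_prop) _ _)]
  refine intervalIntegral.integral_mono_on zero_le_one
    (Continuous.intervalIntegrable (by fun_prop) _ _)
    (Continuous.intervalIntegrable (by fun_prop) _ _) fun t ht => ?_
  have := hφ.2 (hmem x hx t ht) (hmem y hy t ht) ha hb hab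
  simp only [smul_eq_mul] at this
  calc φ (p + (a * x + b * y - p) * t) = φ (a * (p + (x - p) * t) + b * (p + (y - p) * t)) := by
        congr 1
        linear_combination (p * t - p) * hab
    _ ≤ _ := this

lemma convexOn_slope_of_convexOn_deriv {G G' : ℝ → ℝ} (hG : ∀ x, HasDerivAt G (G' x) x)
    (hG' : Continuous G') {s : Set ℝ} (hconv : ConvexOn ℝ s G') {p : ℝ} (hp : p ∈ s) :
    ConvexOn ℝ (s ∩ Ioi p) (slope G p) :=
  ((hconv.integral_comp_segment hG' hp).subset inter_subset_left
    (hconv.1.inter (convex_Ioi p))).congr fun _ hx =>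
      (slope_eq_integral_deriv hG hG' hx.2.ne').symm

lemma radauRemainder_cubic (p0 p1 p2 p3 a b : ℝ) :
    radauRemainder (fun x => p0 + p1 * (x - a) + p2 * (x - a) ^ 2 + p3 * (x - a) ^ 3) a b =
      p3 * (b - a) ^ 4 / 36 := by
  rw [radauRemainder, intervalIntegral.integral_comp_sub_right
    (fun x => p0 + p1 * x + p2 * x ^ 2 + p3 * x ^ 3), intervalIntegral.integral_add,
    intervalIntegral.integral_add, intervalIntegral.integral_add]
  · simp only [intervalIntegral.integral_const, intervalIntegral.integral_const_mul, integral_pow,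
      smul_eq_mul]
    rw [intervalIntegral.integral_const_mul, integral_id]
    ring
  all_goals exact Continuous.intervalIntegrable (by fun_prop) _ _

lemma radauRemainder_nonneg_iff (f : ℝ → ℝ) {a b : ℝ} (hab : a < b) :
    0 ≤ radauRemainder f a b ↔
      (1 / 4) * f a + (3 / 4) * f ((a + 2 * b) / 3) ≤ (1 / (b - a)) * ∫ x in a..b, f x := by
  rw [radauRemainder, one_div_mul_eq_div _ (∫ x in a..b, f x), le_div_iff₀ (sub_pos.2 hab)]
  constructor <;> intro h <;> linarith

lemma radauRemainder_le_of_le {g P : ℝ → ℝ} {a b : ℝ} (hab : a ≤ b)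
    (hg : IntervalIntegrable g MeasureTheory.volume a b)
    (hP : IntervalIntegrable P MeasureTheory.volume a b) (hle : ∀ x ∈ Icc a b, g x ≤ P x) :
    radauRemainder g a b ≤ radauRemainder P a b +
      (b - a) * ((P a - g a) / 4 + 3 / 4 * (P ((a + 2 * b) / 3) - g ((a + 2 * b) / 3))) := by
  have := intervalIntegral.integral_mono_on hab hg hP hle
  rw [radauRemainder, radauRemainder]
  linarith

lemma radauRemainder_nonneg_of_convexOn_slope {f : ℝ → ℝ} {a b : ℝ} (hab : a < b)
    (hf : ContinuousOn f (Icc a b)) (hconv : ConvexOn ℝ (Ioc a b) (slope f a)) :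
    0 ≤ radauRemainder f a b := by
  have hc : (a + 2 * b) / 3 ∈ interior (Ioc a b) := by
    rw [interior_Ioc]
    constructor <;> linarith
  set c := (a + 2 * b) / 3 with hc_def
  obtain ⟨k, hk⟩ := hconv.exists_affine_le_of_mem_interior hc
  -- `f a + (x - a) * (support line of slope f a at c)`: a quadratic, on which the rule is exact
  set L : ℝ → ℝ := fun x =>
    f a + (slope f a c - k * (c - a)) * (x - a) + k * (x - a) ^ 2 + 0 * (x - a) ^ 3
  have hLf : ∀ x ∈ Icc a b, L x ≤ f x := by
    rintro x ⟨hax, hxb⟩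
    rcases hax.eq_or_lt with rfl | hax
    · simp [L]
    have h := mul_le_mul_of_nonneg_left (hk x ⟨hax, hxb⟩) (sub_pos.2 hax).le
    rw [← smul_eq_mul (x - a) (slope f a x), sub_smul_slope, vsub_eq_sub] at h
    linarith
  have hLc : L c = f c := by
    have := sub_smul_slope f a c
    simp only [smul_eq_mul, vsub_eq_sub] at this
    simp only [L]
    linarith
  have h := radauRemainder_le_of_le hab.le (Continuous.intervalIntegrable (by fun_prop) a b)
    (hf.intervalIntegrable_of_Icc hab.le) hLf
  rw [radauRemainder_cubic, ← hc_def, hLc] at h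
  simpa [L] using h

lemma ContDiff.hasDerivAt_iteratedDeriv {G : ℝ → ℝ} {N : ℕ} (hG : ContDiff ℝ N G) (n : ℕ)
    (hn : n < N) (x : ℝ) : HasDerivAt (iteratedDeriv n G) (iteratedDeriv (n + 1) G x) x := by
  rw [iteratedDeriv_succ]
  exact (hG.differentiable_iteratedDeriv n (by exact_mod_cast hn) x).hasDerivAt

lemma divDiff3_nonneg_of_iteratedDeriv_three_nonneg {G : ℝ → ℝ} (hG : ContDiff ℝ 3 G) {u v : ℝ}
    (hd3 : ∀ x ∈ Ioo u v, 0 ≤ iteratedDeriv 3 G x) {x0 x1 x2 x3 : ℝ} (hu : u ≤ x0)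
    (h01 : x0 < x1) (h12 : x1 < x2) (h23 : x2 < x3) (hv : x3 ≤ v) :
    0 ≤ divDiff3 G x0 x1 x2 x3 := by
  have hd := hG.hasDerivAt_iteratedDeriv
  have hmono : MonotoneOn (iteratedDeriv 2 G) (Icc u v) :=
    monotoneOn_of_deriv_nonneg (convex_Icc u v)
      (hG.continuous_iteratedDeriv 2 (by norm_num)).continuousOn
      (fun x _ => (hd 2 (by norm_num) x).differentiableAt.differentiableWithinAt)
      (by rw [interior_Icc, ← iteratedDeriv_succ]; exact hd3)
  have hconv : ConvexOn ℝ (Icc u v) (iteratedDeriv 1 G) :=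
    MonotoneOn.convexOn_of_deriv (convex_Icc u v)
      (hG.continuous_iteratedDeriv 1 (by norm_num)).continuousOn
      (fun x _ => (hd 1 (by norm_num) x).differentiableAt.differentiableWithinAt)
      (by rw [interior_Icc, ← iteratedDeriv_succ]; exact hmono.mono Ioo_subset_Icc_self)
  have hslope := convexOn_slope_of_convexOn_deriv
    (by simpa only [iteratedDeriv_zero] using hd 0 (by norm_num))
    (hG.continuous_iteratedDeriv 1 (by norm_num)) hconv (p := x0) ⟨hu, by linarith⟩
  exact (convexOn_slope_iff_divDiff3_nonneg hslope.1 fun x hx => hx.2).1 hslope x1 x2 x3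
    ⟨⟨by linarith, by linarith⟩, h01⟩ ⟨⟨by linarith, hv⟩, mem_Ioi.2 (by linarith)⟩ h12 h23

lemma exists_taylor_lagrange_two {G : ℝ → ℝ} (hG : ContDiff ℝ 3 G) {t x : ℝ} (htx : t < x) :
    ∃ ξ ∈ Ioo t x, G x = G t + deriv G t * (x - t) + iteratedDeriv 2 G t / 2 * (x - t) ^ 2 +
      iteratedDeriv 3 G ξ / 6 * (x - t) ^ 3 := by
  obtain ⟨ξ, hξ, h⟩ := taylor_mean_remainder_lagrange_iteratedDeriv (n := 2) htx.ne hG.contDiffOn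
  have hD : ∀ k ≤ 3, iteratedDerivWithin k G (uIcc t x) t = iteratedDeriv k G t := fun k hk =>
    iteratedDerivWithin_eq_iteratedDeriv (uniqueDiffOn_uIcc htx.ne)
      (hG.contDiffAt.of_le (by exact_mod_cast hk)) left_mem_uIcc
  refine ⟨ξ, by simpa [uIoo_of_lt htx] using hξ, ?_⟩
  rw [taylor_within_apply] at h
  simp only [Finset.sum_range_succ, Finset.sum_range_zero, hD 0 (by norm_num), hD 1 (by norm_num),
    hD 2 (by norm_num), iteratedDeriv_zero, iteratedDeriv_one] at h
  norm_num [Nat.factorial] at h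
  linarith

lemma radauRemainder_le_of_iteratedDeriv_mem_Icc {G : ℝ → ℝ} (hG : ContDiff ℝ 3 G) {t δ m M : ℝ}
    (hδ : 0 < δ) (hbd : ∀ x ∈ Icc t (t + δ), iteratedDeriv 3 G x ∈ Icc m M) :
    radauRemainder G t (t + δ) ≤ δ ^ 4 * (M / 24 - m / 27) := by
  have taylor (x) (hx : x ∈ Ioc t (t + δ)) : ∃ d ∈ Icc m M, G x = G t + deriv G t * (x - t) +
      iteratedDeriv 2 G t / 2 * (x - t) ^ 2 + d / 6 * (x - t) ^ 3 := by
    obtain ⟨ξ, hξ, hx'⟩ := exists_taylor_lagrange_two hG hx.1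
    exact ⟨_, hbd ξ ⟨hξ.1.le, hξ.2.le.trans hx.2⟩, hx'⟩
  set P : ℝ → ℝ := fun x => G t + deriv G t * (x - t) + iteratedDeriv 2 G t / 2 * (x - t) ^ 2 +
    M / 6 * (x - t) ^ 3
  have hGP : ∀ x ∈ Icc t (t + δ), G x ≤ P x := by
    rintro x ⟨htx, hxδ⟩
    rcases htx.eq_or_lt with rfl | htx
    · simp [P]
    obtain ⟨d, hd, hx⟩ := taylor x ⟨htx, hxδ⟩
    have := mul_le_mul_of_nonneg_right hd.2 (pow_nonneg (sub_pos.2 htx).le 3)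
    simp only [P, hx]
    linarith
  have h := radauRemainder_le_of_le (by linarith) (hG.continuous.intervalIntegrable _ _)
    (Continuous.intervalIntegrable (by fun_prop) _ _) hGP
  rw [radauRemainder_cubic, show (t + 2 * (t + δ)) / 3 = t + 2 * δ / 3 by ring] at h
  obtain ⟨d, hd, hc⟩ := taylor (t + 2 * δ / 3) ⟨by linarith, by linarith⟩
  have hPt : P t - G t = 0 := by simp [P]
  have hPc : P (t + 2 * δ / 3) - G (t + 2 * δ / 3) = (M - d) / 6 * (2 * δ / 3) ^ 3 := by
    simp only [P, hc]
    ring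
  rw [hPt, hPc, add_sub_cancel_left] at h
  have hdm := mul_nonneg (pow_pos hδ 4).le (sub_nonneg.2 hd.1)
  calc radauRemainder G t (t + δ) ≤ _ := h
    _ = δ ^ 4 * (M / 24 - m / 27) - δ ^ 4 * (d - m) / 27 := by ring
    _ ≤ δ ^ 4 * (M / 24 - m / 27) := by linarith

lemma iteratedDeriv_three_nonneg_of_radauRemainder_nonneg {G : ℝ → ℝ} (hG : ContDiff ℝ 3 G)
    {u v : ℝ} (H : ∀ a b, u ≤ a → a < b → b ≤ v → 0 ≤ radauRemainder G a b) {t : ℝ}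
    (ht : t ∈ Ico u v) : 0 ≤ iteratedDeriv 3 G t := by
  by_contra! hneg
  set d := iteratedDeriv 3 G t
  -- within `|d| / 18` of `d`, the bound `M / 24 - m / 27` below is `d / 3888 < 0`
  obtain ⟨δ₀, hδ₀, hnear⟩ := Metric.continuousAt_iff.1
    (hG.continuous_iteratedDeriv 3 le_rfl).continuousAt (-d / 18) (by linarith)
  set δ := min (δ₀ / 2) (v - t)
  have hδ : 0 < δ := lt_min (by linarith) (by linarith [ht.2])
  have hbd : ∀ x ∈ Icc t (t + δ), iteratedDeriv 3 G x ∈ Icc (d + d / 18) (d - d / 18) := by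
    rintro x ⟨htx, hxδ⟩
    have hx : dist x t < δ₀ := by
      rw [Real.dist_eq, abs_of_nonneg (sub_nonneg.2 htx)]
      linarith [min_le_left (δ₀ / 2) (v - t)]
    have := abs_sub_lt_iff.1 (Real.dist_eq _ _ ▸ hnear hx)
    constructor <;> linarith
  have hle := radauRemainder_le_of_iteratedDeriv_mem_Icc hG hδ hbd
  have hnn := H t (t + δ) ht.1 (by linarith) (by linarith [min_le_right (δ₀ / 2) (v - t)])
  nlinarith [pow_pos hδ 4]

noncomputable def steklov (h : ℝ) (g : ℝ → ℝ) (x : ℝ) : ℝ := h⁻¹ * ∫ t in x..x + h, g t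

section Steklov

variable {g : ℝ → ℝ}

lemma steklov_eq_sub_primitive (hg : Continuous g) (h x : ℝ) :
    steklov h g x = h⁻¹ * ((∫ t in 0..x + h, g t) - ∫ t in 0..x, g t) := by
  rw [steklov, intervalIntegral.integral_interval_sub_left (hg.intervalIntegrable _ _)
    (hg.intervalIntegrable _ _)]

lemma hasDerivAt_steklov (hg : Continuous g) (h x : ℝ) :
    HasDerivAt (steklov h g) (h⁻¹ * (g (x + h) - g x)) x := by
  have hP : ∀ y, HasDerivAt (fun x => ∫ t in 0..x, g t) (g y) y := fun y =>
    (hg.integral_hasStrictDerivAt 0 y).hasDerivAt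
  rw [show steklov h g = _ from funext (steklov_eq_sub_primitive hg h)]
  exact (((hP (x + h)).comp_add_const x h).sub (hP x)).const_mul h⁻¹

lemma contDiff_steklov {n : ℕ} (hg : ContDiff ℝ n g) (h : ℝ) :
    ContDiff ℝ (n + 1) (steklov h g) := by
  have hd := hasDerivAt_steklov hg.continuous h
  rw [contDiff_succ_iff_deriv]
  refine ⟨fun x => (hd x).differentiableAt, by simp, ?_⟩
  rw [show deriv (steklov h g) = _ from funext fun x => (hd x).deriv]
  fun_prop

lemma contDiff_iterate_steklov (hg : Continuous g) (h : ℝ) (n : ℕ) :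
    ContDiff ℝ n ((steklov h)^[n] g) := by
  induction n with
  | zero => simpa using hg
  | succ n ih =>
    rw [Function.iterate_succ_apply']
    exact_mod_cast contDiff_steklov ih h

lemma radauRemainder_steklov (hg : Continuous g) (h a b : ℝ) :
    radauRemainder (steklov h g) a b = h⁻¹ * ∫ s in 0..h, radauRemainder g (a + s) (b + s) := by
  set P : ℝ → ℝ := fun x => ∫ t in 0..x, g t
  set Q : ℝ → ℝ := fun x => ∫ t in 0..x, P t
  have hP : ∀ x, HasDerivAt P (g x) x := fun x => (hg.integral_hasStrictDerivAt 0 x).hasDerivAt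
  have hPc : Continuous P := continuous_iff_continuousAt.2 fun x => (hP x).continuousAt
  have hQ : ∀ x, HasDerivAt Q (P x) x := fun x => (hPc.integral_hasStrictDerivAt 0 x).hasDerivAt
  have hst : steklov h g = fun x => h⁻¹ * (P (x + h) - P x) :=
    funext (steklov_eq_sub_primitive hg h)
  set c := (a + 2 * b) / 3
  have hR : (fun s => radauRemainder g (a + s) (b + s)) = fun s =>
      (P (b + s) - P (a + s)) - (b - a) * (g (a + s) / 4 + 3 / 4 * g (c + s)) := by
    funext s
    rw [radauRemainder, ← intervalIntegral.integral_interval_sub_left (hg.intervalIntegrable _ _)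
      (hg.intervalIntegrable _ _), show (a + s + 2 * (b + s)) / 3 = c + s by ring]
    ring
  have hint_st : ∫ x in a..b, steklov h g x =
      h⁻¹ * ((Q (b + h) - Q b) - (Q (a + h) - Q a)) := by
    rw [hst, intervalIntegral.integral_eq_sub_of_hasDerivAt
      (fun x _ => (((hQ (x + h)).comp_add_const x h).sub (hQ x)).const_mul h⁻¹)
      (Continuous.intervalIntegrable (by fun_prop) _ _)]
    simp only [Pi.sub_apply]
    ring
  have hint_R : ∫ s in 0..h, radauRemainder g (a + s) (b + s) =
      (Q (b + h) - Q b) - (Q (a + h) - Q a) -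
        (b - a) * ((P (a + h) - P a) / 4 + 3 / 4 * (P (c + h) - P c)) := by
    rw [hR, intervalIntegral.integral_eq_sub_of_hasDerivAt
      (fun s _ => (((hQ (b + s)).comp_const_add b s).sub ((hQ (a + s)).comp_const_add a s)).sub
        (((((hP (a + s)).comp_const_add a s).div_const 4).add
          (((hP (c + s)).comp_const_add c s).const_mul (3 / 4))).const_mul (b - a)))
      (Continuous.intervalIntegrable (by fun_prop) _ _)]
    simp only [Pi.sub_apply, Pi.add_apply, add_zero]
    ring
  rw [radauRemainder, hint_st, hint_R, hst]
  ring

lemma radauRemainder_steklov_nonneg (hg : Continuous g) {h u v : ℝ} (hh : 0 < h)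
    (H : ∀ a b, u ≤ a → a < b → b ≤ v → 0 ≤ radauRemainder g a b) {a b : ℝ} (hua : u ≤ a)
    (hab : a < b) (hbv : b ≤ v - h) : 0 ≤ radauRemainder (steklov h g) a b := by
  rw [radauRemainder_steklov hg]
  exact mul_nonneg (inv_nonneg.2 hh.le) (intervalIntegral.integral_nonneg hh.le fun s hs =>
    H _ _ (by linarith [hs.1]) (by linarith) (by linarith [hs.2]))

lemma radauRemainder_iterate_steklov_nonneg (hg : Continuous g) {h u v : ℝ} (hh : 0 < h)
    (H : ∀ a b, u ≤ a → a < b → b ≤ v → 0 ≤ radauRemainder g a b) (n : ℕ) {a b : ℝ}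
    (hua : u ≤ a) (hab : a < b) (hbv : b ≤ v - n * h) :
    0 ≤ radauRemainder ((steklov h)^[n] g) a b := by
  induction n generalizing a b with
  | zero => simpa using H a b hua hab (by simpa using hbv)
  | succ n ih =>
    rw [Function.iterate_succ_apply']
    exact radauRemainder_steklov_nonneg (contDiff_iterate_steklov hg h n).continuous hh
      (fun a b hua hab hbv => ih hua hab hbv) hua hab (by push_cast at hbv; linarith)

lemma abs_steklov_sub_le (hg : Continuous g) {h x C ε : ℝ} (hh : 0 < h)
    (hb : ∀ z ∈ Icc x (x + h), |g z - C| ≤ ε) : |steklov h g x - C| ≤ ε := by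
  have hC : steklov h g x - C = h⁻¹ * ∫ t in x..x + h, (g t - C) := by
    rw [steklov, intervalIntegral.integral_sub (hg.intervalIntegrable _ _) intervalIntegrable_const,
      intervalIntegral.integral_const, smul_eq_mul, add_sub_cancel_left]
    field_simp
  have hint : ‖∫ t in x..x + h, (g t - C)‖ ≤ ε * |x + h - x| := by
    refine intervalIntegral.norm_integral_le_of_norm_le_const fun z hz => ?_
    rw [uIoc_of_le (by linarith)] at hz
    exact hb z (Ioc_subset_Icc_self hz)
  rw [Real.norm_eq_abs, add_sub_cancel_left, abs_of_pos hh] at hint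
  rw [hC, abs_mul, abs_inv, abs_of_pos hh]
  calc h⁻¹ * |∫ t in x..x + h, (g t - C)| ≤ h⁻¹ * (ε * h) := by gcongr
    _ = ε := by field_simp

lemma abs_iterate_steklov_sub_le (hg : Continuous g) {h C ε : ℝ} (hh : 0 < h) (n : ℕ) {x : ℝ}
    (hb : ∀ z ∈ Icc x (x + n * h), |g z - C| ≤ ε) : |(steklov h)^[n] g x - C| ≤ ε := by
  induction n generalizing g with
  | zero => simpa using hb x (by simp)
  | succ n ih =>
    rw [Function.iterate_succ_apply]
    refine ih (contDiff_iterate_steklov hg h 1).continuous fun z hz => ?_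
    exact abs_steklov_sub_le hg hh fun w hw =>
      hb w ⟨hz.1.trans hw.1, by push_cast; linarith [hz.2, hw.2]⟩

lemma tendsto_iterate_steklov (hg : Continuous g) (n : ℕ) {p : ℝ} {y : ℝ → ℝ}
    (hy : ∀ h > 0, y h ∈ Icc (p - n * h) p) :
    Tendsto (fun h => (steklov h)^[n] g (y h)) (𝓝[>] 0) (𝓝 (g p)) := by
  rw [Metric.tendsto_nhdsWithin_nhds]
  intro ε hε
  obtain ⟨δ, hδ, hnear⟩ :=
    Metric.continuousAt_iff.1 (hg.continuousAt (x := p)) (ε / 2) (by positivity)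
  refine ⟨δ / (n + 1), by positivity, fun h (hh : 0 < h) hdist => ?_⟩
  rw [Real.dist_eq, sub_zero, abs_of_pos hh, lt_div_iff₀ (by positivity)] at hdist
  have hwin : ∀ z ∈ Icc (y h) (y h + n * h), |g z - g p| ≤ ε / 2 := by
    rintro z ⟨hz1, hz2⟩
    have hz : dist z p < δ := by
      rw [Real.dist_eq, abs_lt]
      constructor <;> linarith [(hy h hh).1, (hy h hh).2]
    exact (Real.dist_eq _ _ ▸ hnear hz).le
  rw [Real.dist_eq]
  linarith [abs_iterate_steklov_sub_le hg hh n hwin]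

end Steklov

lemma tendsto_divDiff3 {ι : Type*} {l : Filter ι} {F : ι → ℝ → ℝ} {f : ℝ → ℝ} {y : ι → ℝ}
    {x0 x1 x2 x3 : ℝ} (h0 : Tendsto (fun i => F i x0) l (𝓝 (f x0)))
    (h1 : Tendsto (fun i => F i x1) l (𝓝 (f x1))) (h2 : Tendsto (fun i => F i x2) l (𝓝 (f x2)))
    (h3 : Tendsto (fun i => F i (y i)) l (𝓝 (f x3))) (hy : Tendsto y l (𝓝 x3))
    (h01 : x0 < x1) (h12 : x1 < x2) (h23 : x2 < x3) :
    Tendsto (fun i => divDiff3 (F i) x0 x1 x2 (y i)) l (𝓝 (divDiff3 f x0 x1 x2 x3)) := by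
  have hc (a : ℝ) : Tendsto (fun _ : ι => a) l (𝓝 a) := tendsto_const_nhds
  refine (((h0.div ((hc _).mul ((hc x0).sub hy)) ?_).add
    (h1.div ((hc _).mul ((hc x1).sub hy)) ?_)).add (h2.div ((hc _).mul ((hc x2).sub hy)) ?_)).add
    (h3.div (((hy.sub (hc x0)).mul (hy.sub (hc x1))).mul (hy.sub (hc x2))) ?_) <;>
  apply_rules [mul_ne_zero, sub_ne_zero_of_ne] <;> intro h <;> linarith

lemma Continuous.divDiff3_nonneg_of_radauRemainder_nonneg {e : ℝ → ℝ} (he : Continuous e)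
    {u v : ℝ} (H : ∀ a b, u ≤ a → a < b → b ≤ v → 0 ≤ radauRemainder e a b) {x0 x1 x2 x3 : ℝ}
    (hu : u ≤ x0) (h01 : x0 < x1) (h12 : x1 < x2) (h23 : x2 < x3) (hv : x3 ≤ v) :
    0 ≤ divDiff3 e x0 x1 x2 x3 := by
  have hsmooth : ∀ h ∈ Ioo 0 ((x3 - x2) / 3),
      0 ≤ divDiff3 ((steklov h)^[3] e) x0 x1 x2 (x3 - 3 * h) := by
    rintro h ⟨hh, hh'⟩
    have hG := contDiff_iterate_steklov he h 3
    have H' : ∀ a b, u ≤ a → a < b → b ≤ v - 3 * h →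
        0 ≤ radauRemainder ((steklov h)^[3] e) a b := fun a b hua hab hbv =>
      radauRemainder_iterate_steklov_nonneg he hh H 3 hua hab (by push_cast; exact hbv)
    exact divDiff3_nonneg_of_iteratedDeriv_three_nonneg hG
      (fun t ht => iteratedDeriv_three_nonneg_of_radauRemainder_nonneg hG H' ⟨ht.1.le, ht.2⟩)
      hu h01 h12 (by linarith) (by linarith)
  have hfix (p : ℝ) : Tendsto (fun h => (steklov h)^[3] e p) (𝓝[>] 0) (𝓝 (e p)) :=
    tendsto_iterate_steklov he 3 fun h hh => ⟨by push_cast; linarith, le_rfl⟩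
  have hy : Tendsto (fun h : ℝ => x3 - 3 * h) (𝓝[>] 0) (𝓝 x3) := by
    simpa using ((by fun_prop : Continuous fun h : ℝ => x3 - 3 * h).tendsto 0).mono_left
      nhdsWithin_le_nhds
  have hlim := tendsto_divDiff3 (hfix x0) (hfix x1) (hfix x2)
    (tendsto_iterate_steklov he 3 fun h hh => ⟨by push_cast; linarith, by linarith⟩) hy
    h01 h12 h23
  exact ge_of_tendsto hlim (eventually_of_mem (Ioo_mem_nhdsGT (by linarith)) hsmooth)

lemma ContinuousOn.divDiff3_nonneg_of_radauRemainder_nonneg {f : ℝ → ℝ} {u v : ℝ}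
    (hf : ContinuousOn f (Icc u v))
    (H : ∀ a b, u ≤ a → a < b → b ≤ v → 0 ≤ radauRemainder f a b) {x0 x1 x2 x3 : ℝ}
    (hu : u ≤ x0) (h01 : x0 < x1) (h12 : x1 < x2) (h23 : x2 < x3) (hv : x3 ≤ v) :
    0 ≤ divDiff3 f x0 x1 x2 x3 := by
  have huv : u ≤ v := by linarith
  set e : ℝ → ℝ := fun x => f (projIcc u v huv x)
  have he : Continuous e :=
    hf.comp_continuous (continuous_subtype_val.comp continuous_projIcc) fun x =>
      (projIcc u v huv x).2
  have heq : EqOn e f (Icc u v) := fun x hx => by simp [e, projIcc_of_mem huv hx]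
  have H' : ∀ a b, u ≤ a → a < b → b ≤ v → 0 ≤ radauRemainder e a b := fun a b hua hab hbv => by
    have hsub : uIcc a b ⊆ Icc u v := by
      rw [uIcc_of_le hab.le]
      exact Icc_subset_Icc hua hbv
    rw [radauRemainder, intervalIntegral.integral_congr (heq.mono hsub),
      heq ⟨hua, by linarith⟩, heq ⟨by linarith, by linarith⟩]
    exact H a b hua hab hbv
  have := he.divDiff3_nonneg_of_radauRemainder_nonneg H' hu h01 h12 h23 hv
  rwa [divDiff3, heq ⟨hu, by linarith⟩, heq ⟨by linarith, by linarith⟩,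
    heq ⟨by linarith, by linarith⟩, heq ⟨by linarith, hv⟩] at this

theorem stmt14 (I : Set ℝ) (hI : I.OrdConnected) (f : ℝ → ℝ)
    (hcont : ContinuousOn f I) :
    (∀ x0 x1 x2 x3 : ℝ, x0 ∈ I → x1 ∈ I → x2 ∈ I → x3 ∈ I →
        x0 < x1 → x1 < x2 → x2 < x3 → 0 ≤ divDiff3 f x0 x1 x2 x3) ↔
      ∀ a b : ℝ, a ∈ I → b ∈ I → a < b →
        (1 / 4) * f a + (3 / 4) * f ((a + 2 * b) / 3) ≤
          (1 / (b - a)) * ∫ x in a..b, f x := by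
  constructor
  · intro H a b ha hb hab
    have hsub : Icc a b ⊆ I := hI.out ha hb
    rw [← radauRemainder_nonneg_iff f hab]
    refine radauRemainder_nonneg_of_convexOn_slope hab (hcont.mono hsub)
      ((convexOn_slope_iff_divDiff3_nonneg (convex_Ioc a b) fun x hx => hx.1).2 ?_)
    intro x1 x2 x3 h1 h3 h12 h23
    exact H a x1 x2 x3 ha (hsub (Ioc_subset_Icc_self h1))
      (hsub ⟨by linarith [h1.1], by linarith [h3.2]⟩) (hsub (Ioc_subset_Icc_self h3)) h1.1 h12 h23
  · intro H x0 x1 x2 x3 h0 _ _ h3 h01 h12 h23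
    have hsub : Icc x0 x3 ⊆ I := hI.out h0 h3
    refine (hcont.mono hsub).divDiff3_nonneg_of_radauRemainder_nonneg
      (fun a b hua hab hbv => ?_) le_rfl h01 h12 h23 le_rfl
    exact (radauRemainder_nonneg_iff f hab).2
      (H a b (hsub ⟨hua, by linarith⟩) (hsub ⟨by linarith, hbv⟩) hab)
end

section
/- If f : [0,A] → ℝ is continuous and satisfies f(x)+f(y)+f(z)+f(x+y+z) ≥ f(x+y)+f(y+z)+f(z+x)+f(0) for all x,y,z ≥ 0 with x+y+z ≤ A, then f(|x|)+f(|y|)+f(|z|)+f(|x+y+z|) ≥ f(|x+y|)+f(|y+z|)+f(|z+x|)+f(0) whenever x, y ∈ [0,A], z ∈ [-A,0], and x + y ≤ |z|. -/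
theorem stmt16 (A : ℝ) (hA : 0 < A) (f : ℝ → ℝ)
    (hcont : ContinuousOn f (Set.Icc 0 A))
    (hHH : ∀ x y z : ℝ, 0 ≤ x → 0 ≤ y → 0 ≤ z → x + y + z ≤ A →
      f (x + y) + f (y + z) + f (z + x) + f 0 ≤
        f x + f y + f z + f (x + y + z)) :
    ∀ x y z : ℝ, x ∈ Set.Icc 0 A → y ∈ Set.Icc 0 A → z ∈ Set.Icc (-A) 0 →
      x + y ≤ |z| →
      f |x + y| + f |y + z| + f |z + x| + f 0 ≤
        f |x| + f |y| + f |z| + f |x + y + z| := by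
  intro x y z hx hy hz hxyz
  obtain ⟨hx0, hxA⟩ := hx
  obtain ⟨hy0, hyA⟩ := hy
  obtain ⟨hzA, hz0⟩ := hz
  rw [abs_of_nonpos hz0] at hxyz
  have h1 : |x| = x := abs_of_nonneg hx0
  have h2 : |y| = y := abs_of_nonneg hy0
  have h3 : |z| = -z := abs_of_nonpos hz0
  have h4 : |x + y| = x + y := abs_of_nonneg (by linarith)
  have h5 : |y + z| = -(y + z) := abs_of_nonpos (by linarith)
  have h6 : |z + x| = -(z + x) := abs_of_nonpos (by linarith)
  have h7 : |x + y + z| = -(x + y + z) := abs_of_nonpos (by linarith)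
  rw [h1, h2, h3, h4, h5, h6, h7]
  have := hHH x y (-(x + y + z)) hx0 hy0 (by linarith) (by linarith)
  have e1 : y + -(x + y + z) = -(z + x) := by ring
  have e2 : -(x + y + z) + x = -(y + z) := by ring
  have e3 : x + y + -(x + y + z) = -z := by ring
  rw [e1, e2, e3] at this
  linarith
end

section
/- If f : ℝ₊ → ℝ is continuous, nondecreasing, concave, and 3-convex, then f(|x|)+f(|y|)+f(|z|)+f(|x+y+z|) ≥ f(|x+y|)+f(|y+z|)+f(|z+x|)+f(0) for all real numbers x, y, z. -/
/-- Second-order divided difference. -/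
noncomputable def dd2Aux (f : ℝ → ℝ) (a b c : ℝ) : ℝ :=
  f a / ((a-b)*(a-c)) + f b / ((b-a)*(b-c)) + f c / ((c-a)*(c-b))

/-- Newton-type recurrence: replacing the third node `c` by `D` in a second-order
divided difference produces `(D - c)` times the third-order divided difference. -/
lemma dd2Aux_replace (f : ℝ → ℝ) {a b c D : ℝ} (hab : a ≠ b) (hac : a ≠ c) (haD : a ≠ D)
    (hbc : b ≠ c) (hbD : b ≠ D) (hcD : c ≠ D) :
    dd2Aux f a b D - dd2Aux f a b c = (D - c) * divDiff3 f a b c D := by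
  have h1 : a - b ≠ 0 := sub_ne_zero.2 hab
  have h2 : b - a ≠ 0 := sub_ne_zero.2 hab.symm
  have h3 : a - c ≠ 0 := sub_ne_zero.2 hac
  have h4 : c - a ≠ 0 := sub_ne_zero.2 hac.symm
  have h5 : a - D ≠ 0 := sub_ne_zero.2 haD
  have h6 : D - a ≠ 0 := sub_ne_zero.2 haD.symm
  have h7 : b - c ≠ 0 := sub_ne_zero.2 hbc
  have h8 : c - b ≠ 0 := sub_ne_zero.2 hbc.symm
  have h9 : b - D ≠ 0 := sub_ne_zero.2 hbD
  have h10 : D - b ≠ 0 := sub_ne_zero.2 hbD.symm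
  have h11 : c - D ≠ 0 := sub_ne_zero.2 hcD
  have h12 : D - c ≠ 0 := sub_ne_zero.2 hcD.symm
  have ca : 1/((a-b)*(a-D)) - 1/((a-b)*(a-c)) = (D-c)*(1/((a-b)*(a-c)*(a-D))) := by
    field_simp
    ring
  have cb : 1/((b-a)*(b-D)) - 1/((b-a)*(b-c)) = (D-c)*(1/((b-a)*(b-c)*(b-D))) := by
    field_simp
    ring
  have cc : -(1/((c-a)*(c-b))) = (D-c)*(1/((c-a)*(c-b)*(c-D))) := by
    field_simp
    ring
  have cD : 1/((D-a)*(D-b)) = (D-c)*(1/((D-a)*(D-b)*(D-c))) := by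
    field_simp
  unfold dd2Aux divDiff3
  linear_combination (f a) * ca + (f b) * cb + (f c) * cc + (f D) * cD

/-- For `d > 0`, the function `t ↦ f (t + d) - f t` has nonnegative second-order
divided differences on nonnegative nodes (i.e. it is "convex" there). -/
lemma phi_dd2Aux (f : ℝ → ℝ)
    (hconv : ∀ x0 x1 x2 x3 : ℝ, 0 ≤ x0 → 0 ≤ x1 → 0 ≤ x2 → 0 ≤ x3 →
      x0 < x1 → x1 < x2 → x2 < x3 → 0 ≤ divDiff3 f x0 x1 x2 x3)
    {u v w d : ℝ} (hu : 0 ≤ u) (huv : u < v) (hvw : v < w) (hd : 0 < d) :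
    0 ≤ dd2Aux (fun t => f (t+d) - f t) u v w := by
  have hv : 0 ≤ v := le_trans hu huv.le
  have hw : 0 ≤ w := le_trans hv hvw.le
  have huw : u < w := huv.trans hvw
  have T1 : dd2Aux f u v (w+d) - dd2Aux f u v w = d * divDiff3 f u v w (w+d) := by
    have := dd2Aux_replace f (a := u) (b := v) (c := w) (D := w+d)
      huv.ne huw.ne (by nlinarith) hvw.ne (by nlinarith) (by nlinarith)
    simpa using this
  have T2 : dd2Aux f u (v+d) (w+d) - dd2Aux f u v (w+d) = d * divDiff3 f u v (v+d) (w+d) := by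
    have h := dd2Aux_replace f (a := u) (b := w+d) (c := v) (D := v+d)
      (by nlinarith) huv.ne (by nlinarith) (by nlinarith) (by nlinarith) (by nlinarith)
    have e1 : dd2Aux f u (w+d) (v+d) = dd2Aux f u (v+d) (w+d) := by unfold dd2Aux; ring
    have e2 : dd2Aux f u (w+d) v = dd2Aux f u v (w+d) := by unfold dd2Aux; ring
    have e3 : divDiff3 f u (w+d) v (v+d) = divDiff3 f u v (v+d) (w+d) := by
      unfold divDiff3; ring
    rw [e1, e2, e3] at h
    simpa using h
  have T3 : dd2Aux f (u+d) (v+d) (w+d) - dd2Aux f u (v+d) (w+d)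
      = d * divDiff3 f u (u+d) (v+d) (w+d) := by
    have h := dd2Aux_replace f (a := v+d) (b := w+d) (c := u) (D := u+d)
      (by nlinarith) (by nlinarith) (by nlinarith) (by nlinarith) (by nlinarith) (by nlinarith)
    have e1 : dd2Aux f (v+d) (w+d) (u+d) = dd2Aux f (u+d) (v+d) (w+d) := by unfold dd2Aux; ring
    have e2 : dd2Aux f (v+d) (w+d) u = dd2Aux f u (v+d) (w+d) := by unfold dd2Aux; ring
    have e3 : divDiff3 f (v+d) (w+d) u (u+d) = divDiff3 f u (u+d) (v+d) (w+d) := by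
      unfold divDiff3; ring
    rw [e1, e2, e3] at h
    simpa using h
  have hsplit : dd2Aux (fun t => f (t+d) - f t) u v w
      = dd2Aux f (u+d) (v+d) (w+d) - dd2Aux f u v w := by
    unfold dd2Aux; ring_nf
  have n1 : 0 ≤ d * divDiff3 f u v w (w+d) :=
    mul_nonneg hd.le (hconv u v w (w+d) hu hv hw (by linarith) huv hvw (by linarith))
  have n2 : 0 ≤ d * divDiff3 f u v (v+d) (w+d) :=
    mul_nonneg hd.le (hconv u v (v+d) (w+d) hu hv (by linarith) (by linarith) huv
      (by linarith) (by linarith))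
  have n3 : 0 ≤ d * divDiff3 f u (u+d) (v+d) (w+d) :=
    mul_nonneg hd.le (hconv u (u+d) (v+d) (w+d) hu (by linarith) (by linarith) (by linarith)
      (by linarith) (by linarith) (by linarith))
  rw [hsplit]
  linarith

/-- Explicit form of a second-order divided difference with first node `0`. -/
lemma dd2Aux_form (g : ℝ → ℝ) {p q : ℝ} (hp : p ≠ 0) (hq : q ≠ 0) (hpq : p ≠ q) :
    dd2Aux g 0 p q = ((q-p) * g 0 - q * g p + p * g q) / (p*q*(q-p)) := by
  have h1 : q - p ≠ 0 := sub_ne_zero.2 hpq.symm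
  have h2 : p - q ≠ 0 := sub_ne_zero.2 hpq
  unfold dd2Aux
  rw [eq_div_iff (by simp [hp, hq, h1, mul_ne_zero])]
  field_simp
  ring

/-- The all-nonnegative case. -/
lemma posCase (f : ℝ → ℝ)
    (hconv : ∀ x0 x1 x2 x3 : ℝ, 0 ≤ x0 → 0 ≤ x1 → 0 ≤ x2 → 0 ≤ x3 →
      x0 < x1 → x1 < x2 → x2 < x3 → 0 ≤ divDiff3 f x0 x1 x2 x3)
    {a b c : ℝ} (ha : 0 ≤ a) (hb : 0 ≤ b) (hc : 0 ≤ c) :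
    f (a+b) + f (b+c) + f (a+c) + f 0 ≤ f a + f b + f c + f (a+b+c) := by
  rcases eq_or_lt_of_le ha with rfl | ha'
  · simp only [zero_add, add_zero]; linarith
  rcases eq_or_lt_of_le hb with rfl | hb'
  · simp only [zero_add, add_zero]; linarith
  rcases eq_or_lt_of_le hc with rfl | hc'
  · simp only [zero_add, add_zero]; linarith
  have h1 : 0 ≤ dd2Aux (fun t => f (t+c) - f t) 0 a (a+b) :=
    phi_dd2Aux f hconv le_rfl ha' (by linarith) hc'
  have h2 : 0 ≤ dd2Aux (fun t => f (t+c) - f t) 0 b (a+b) :=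
    phi_dd2Aux f hconv le_rfl hb' (by linarith) hc'
  rw [dd2Aux_form _ ha'.ne' (by positivity) (by linarith)] at h1
  rw [show a + b - a = b by ring] at h1
  simp only [zero_add] at h1
  rw [le_div_iff₀ (by positivity), zero_mul] at h1
  rw [dd2Aux_form _ hb'.ne' (by positivity) (by linarith)] at h2
  rw [show a + b - b = a by ring] at h2
  simp only [zero_add] at h2
  rw [le_div_iff₀ (by positivity), zero_mul] at h2
  have hE : 0 ≤ (a+b) * (f a + f b + f c + f (a+b+c) - (f (a+b) + f (b+c) + f (a+c) + f 0)) := by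
    linarith [h1, h2]
  have hE2 : 0 ≤ f a + f b + f c + f (a+b+c) - (f (a+b) + f (b+c) + f (a+c) + f 0) := by
    by_contra hneg
    push_neg at hneg
    nlinarith [hE, hneg, ha', hb']
  linarith

lemma concave_four (f : ℝ → ℝ) (hconc : ConcaveOn ℝ (Set.Ici 0) f)
    {p q r s : ℝ} (hp : 0 ≤ p) (hpq : p ≤ q) (hqs : q ≤ s) (hpr : p ≤ r) (hrs : r ≤ s)
    (hsum : p + s = q + r) : f p + f s ≤ f q + f r := by
  rcases eq_or_lt_of_le (hpq.trans hqs) with heq | hps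
  · have hq : q = p := le_antisymm (heq ▸ hqs) hpq
    have hr : r = p := le_antisymm (heq ▸ hrs) hpr
    rw [hq, hr, ← heq]
  · set t : ℝ := (q - p)/(s - p) with ht
    have hsp : (0:ℝ) < s - p := by linarith
    have ht0 : 0 ≤ t := div_nonneg (by linarith) hsp.le
    have ht1 : t ≤ 1 := by rw [ht, div_le_one hsp]; linarith
    have hmemp : p ∈ Set.Ici (0:ℝ) := Set.mem_Ici.2 hp
    have hmems : s ∈ Set.Ici (0:ℝ) := Set.mem_Ici.2 (by linarith)
    have hq := hconc.2 hmemp hmems (by linarith : (0:ℝ) ≤ 1 - t) ht0 (by ring)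
    have hr := hconc.2 hmemp hmems ht0 (by linarith : (0:ℝ) ≤ 1 - t) (by ring)
    have eq1 : (1-t) • p + t • s = q := by
      simp only [smul_eq_mul, ht]
      field_simp
      ring
    have eq2 : t • p + (1-t) • s = r := by
      simp only [smul_eq_mul, ht]
      field_simp
      linear_combination (s - p) * hsum
    rw [eq1] at hq
    rw [eq2] at hr
    simp only [smul_eq_mul] at hq hr
    nlinarith [hq, hr]

/-- The mixed case: two nonnegative arguments `x ≥ y ≥ 0` and one nonpositive `-c`. -/
lemma mixedCase (f : ℝ → ℝ)
    (hmono : MonotoneOn f (Set.Ici 0))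
    (hconc : ConcaveOn ℝ (Set.Ici 0) f)
    (hconv : ∀ x0 x1 x2 x3 : ℝ, 0 ≤ x0 → 0 ≤ x1 → 0 ≤ x2 → 0 ≤ x3 →
      x0 < x1 → x1 < x2 → x2 < x3 → 0 ≤ divDiff3 f x0 x1 x2 x3)
    {x y c : ℝ} (hy : 0 ≤ y) (hc : 0 ≤ c) (hyx : y ≤ x) :
    f (x+y) + f |y-c| + f |x-c| + f 0 ≤ f x + f y + f c + f |x+y-c| := by
  have hx : 0 ≤ x := hy.trans hyx
  rcases le_total c y with h1 | h1
  · -- c ≤ y ≤ x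
    rw [abs_of_nonneg (by linarith : (0:ℝ) ≤ y - c), abs_of_nonneg (by linarith : (0:ℝ) ≤ x - c),
      abs_of_nonneg (by linarith : (0:ℝ) ≤ x + y - c)]
    have m1 : f (y-c) ≤ f y :=
      hmono (Set.mem_Ici.2 (by linarith)) (Set.mem_Ici.2 hy) (by linarith)
    have m2 : f (x-c) ≤ f x :=
      hmono (Set.mem_Ici.2 (by linarith)) (Set.mem_Ici.2 hx) (by linarith)
    have C : f 0 + f (x+y) ≤ f c + f (x+y-c) :=
      concave_four f hconc le_rfl hc (by linarith) (by linarith) (by linarith) (by ring)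
    linarith
  · rcases le_total c x with h2 | h2
    · -- y ≤ c ≤ x
      rw [abs_of_nonpos (by linarith : y - c ≤ 0), neg_sub,
        abs_of_nonneg (by linarith : (0:ℝ) ≤ x - c),
        abs_of_nonneg (by linarith : (0:ℝ) ≤ x + y - c)]
      have m1 : f (c-y) ≤ f c :=
        hmono (Set.mem_Ici.2 (by linarith)) (Set.mem_Ici.2 hc) (by linarith)
      have m2 : f 0 ≤ f y := hmono (Set.mem_Ici.2 le_rfl) (Set.mem_Ici.2 hy) hy
      have C : f (x-c) + f (x+y) ≤ f x + f (x+y-c) :=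
        concave_four f hconc (by linarith) (by linarith) (by linarith) (by linarith)
          (by linarith) (by ring)
      linarith
    · rcases le_total c (x+y) with h3 | h3
      · -- x ≤ c ≤ x + y
        rw [abs_of_nonpos (by linarith : y - c ≤ 0), neg_sub,
          abs_of_nonpos (by linarith : x - c ≤ 0), neg_sub,
          abs_of_nonneg (by linarith : (0:ℝ) ≤ x + y - c)]
        have m1 : f (c-y) ≤ f x :=
          hmono (Set.mem_Ici.2 (by linarith)) (Set.mem_Ici.2 hx) (by linarith)
        have m2 : f (c-x) ≤ f y :=
          hmono (Set.mem_Ici.2 (by linarith)) (Set.mem_Ici.2 hy) (by linarith)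
        have C : f 0 + f (x+y) ≤ f (x+y-c) + f c :=
          concave_four f hconc le_rfl (by linarith) (by linarith) (by linarith)
            (by linarith) (by ring)
        linarith
      · -- x + y ≤ c
        rw [abs_of_nonpos (by linarith : y - c ≤ 0), neg_sub,
          abs_of_nonpos (by linarith : x - c ≤ 0), neg_sub,
          abs_of_nonpos (by linarith : x + y - c ≤ 0), neg_sub]
        have h := posCase f hconv (a := x) (b := y) (c := c - (x+y)) hx hy (by linarith)
        rw [show y + (c - (x+y)) = c - x by ring, show x + (c - (x+y)) = c - y by ring,
          show x + y + (c - (x+y)) = c by ring] at h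
        linarith

/-- The mixed case, with no ordering between the nonnegative arguments. -/
lemma mixedCase' (f : ℝ → ℝ)
    (hmono : MonotoneOn f (Set.Ici 0))
    (hconc : ConcaveOn ℝ (Set.Ici 0) f)
    (hconv : ∀ x0 x1 x2 x3 : ℝ, 0 ≤ x0 → 0 ≤ x1 → 0 ≤ x2 → 0 ≤ x3 →
      x0 < x1 → x1 < x2 → x2 < x3 → 0 ≤ divDiff3 f x0 x1 x2 x3)
    {x y c : ℝ} (hx : 0 ≤ x) (hy : 0 ≤ y) (hc : 0 ≤ c) :
    f (x+y) + f |y-c| + f |x-c| + f 0 ≤ f x + f y + f c + f |x+y-c| := by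
  rcases le_total y x with h | h
  · exact mixedCase f hmono hconc hconv hy hc h
  · have := mixedCase f hmono hconc hconv hx hc h
    rw [show y + x = x + y by ring] at this
    linarith

theorem stmt18 (f : ℝ → ℝ)
    (hcont : ContinuousOn f (Set.Ici 0))
    (hmono : MonotoneOn f (Set.Ici 0))
    (hconc : ConcaveOn ℝ (Set.Ici 0) f)
    (hconv : ∀ x0 x1 x2 x3 : ℝ, 0 ≤ x0 → 0 ≤ x1 → 0 ≤ x2 → 0 ≤ x3 →
      x0 < x1 → x1 < x2 → x2 < x3 → 0 ≤ divDiff3 f x0 x1 x2 x3) :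
    ∀ x y z : ℝ,
      f |x + y| + f |y + z| + f |z + x| + f 0 ≤
        f |x| + f |y| + f |z| + f |x + y + z| := by
  intro x y z
  rcases le_or_gt 0 x with hx | hx
  · rcases le_or_gt 0 y with hy | hy
    · rcases le_or_gt 0 z with hz | hz
      · -- + + +
        rw [abs_of_nonneg hx, abs_of_nonneg hy, abs_of_nonneg hz,
          abs_of_nonneg (by linarith : (0:ℝ) ≤ x + y),
          abs_of_nonneg (by linarith : (0:ℝ) ≤ y + z),
          abs_of_nonneg (by linarith : (0:ℝ) ≤ z + x),
          abs_of_nonneg (by linarith : (0:ℝ) ≤ x + y + z)]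
        have h := posCase f hconv hx hy hz
        rw [show x + z = z + x by ring] at h
        linarith
      · -- + + -
        rw [abs_of_nonneg hx, abs_of_nonneg hy, abs_of_neg hz,
          abs_of_nonneg (by linarith : (0:ℝ) ≤ x + y)]
        have h := mixedCase' f hmono hconc hconv hx hy (by linarith : (0:ℝ) ≤ -z)
        simp only [sub_neg_eq_add] at h
        rw [show x + z = z + x by ring] at h
        linarith
    · rcases le_or_gt 0 z with hz | hz
      · -- + - +
        rw [abs_of_nonneg hx, abs_of_neg hy, abs_of_nonneg hz,
          abs_of_nonneg (by linarith : (0:ℝ) ≤ z + x)]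
        have h := mixedCase' f hmono hconc hconv hx hz (by linarith : (0:ℝ) ≤ -y)
        simp only [sub_neg_eq_add] at h
        rw [show x + z + y = x + y + z by ring, show x + z = z + x by ring,
          show z + y = y + z by ring] at h
        linarith
      · -- + - -
        rw [abs_of_nonneg hx, abs_of_neg hy, abs_of_neg hz,
          abs_of_neg (by linarith : y + z < 0)]
        have h := mixedCase' f hmono hconc hconv (by linarith : (0:ℝ) ≤ -y)
          (by linarith : (0:ℝ) ≤ -z) hx
        rw [show -y + -z - x = -(x+y+z) by ring, show -y + -z = -(y+z) by ring,
          show -z - x = -(z+x) by ring, show -y - x = -(x+y) by ring] at h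
        simp only [abs_neg] at h
        linarith
  · rcases le_or_gt 0 y with hy | hy
    · rcases le_or_gt 0 z with hz | hz
      · -- - + +
        rw [abs_of_neg hx, abs_of_nonneg hy, abs_of_nonneg hz,
          abs_of_nonneg (by linarith : (0:ℝ) ≤ y + z)]
        have h := mixedCase' f hmono hconc hconv hy hz (by linarith : (0:ℝ) ≤ -x)
        simp only [sub_neg_eq_add] at h
        rw [show y + z + x = x + y + z by ring, show y + x = x + y by ring] at h
        linarith
      · -- - + -
        rw [abs_of_neg hx, abs_of_nonneg hy, abs_of_neg hz,
          abs_of_neg (by linarith : z + x < 0)]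
        have h := mixedCase' f hmono hconc hconv (by linarith : (0:ℝ) ≤ -x)
          (by linarith : (0:ℝ) ≤ -z) hy
        rw [show -x + -z - y = -(x+y+z) by ring, show -x + -z = -(z+x) by ring,
          show -z - y = -(y+z) by ring, show -x - y = -(x+y) by ring] at h
        simp only [abs_neg] at h
        linarith
    · rcases le_or_gt 0 z with hz | hz
      · -- - - +
        rw [abs_of_neg hx, abs_of_neg hy, abs_of_nonneg hz,
          abs_of_neg (by linarith : x + y < 0)]
        have h := mixedCase' f hmono hconc hconv (by linarith : (0:ℝ) ≤ -x)
          (by linarith : (0:ℝ) ≤ -y) hz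
        rw [show -x + -y - z = -(x+y+z) by ring, show -x + -y = -(x+y) by ring,
          show -y - z = -(y+z) by ring, show -x - z = -(z+x) by ring] at h
        simp only [abs_neg] at h
        linarith
      · -- - - -
        rw [abs_of_neg hx, abs_of_neg hy, abs_of_neg hz,
          abs_of_neg (by linarith : x + y < 0), abs_of_neg (by linarith : y + z < 0),
          abs_of_neg (by linarith : z + x < 0), abs_of_neg (by linarith : x + y + z < 0)]
        have h := posCase f hconv (a := -x) (b := -y) (c := -z)
          (by linarith) (by linarith) (by linarith)
        rw [show -x + -y + -z = -(x+y+z) by ring, show -x + -y = -(x+y) by ring,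
          show -y + -z = -(y+z) by ring, show -x + -z = -(z+x) by ring] at h
        linarith
end

section
/- For all real x, y, z and all α ∈ (0,1], |x|^α + |y|^α + |z|^α + |x+y+z|^α ≥ |x+y|^α + |y+z|^α + |z+x|^α. -/
/-!
As `|·| ^ α` is even, the inequality is symmetric in the four numbers `x, y, z, -(x + y + z)`
(which sum to zero) and invariant under negating all of them; so two of `x, y, z` may be
assumed nonnegative. When all of `x, y, z` are nonnegative, write `t ^ α = t * t ^ (α - 1)`:
the inequality becomes a sum, weighted by `x`, `y` and `z`, of three instances of
`g p + g q ≤ g u + g s` (for `u ≤ p, q` and `p + q = u + s`) for the convex function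
`g t = t ^ (α - 1)`. When exactly two of the four numbers are negative, the three pair terms
can be matched with the four single terms, by monotonicity of `t ^ α` and, once, its
subadditivity.
-/

open Set

theorem convexOn_rpow_of_nonpos {p : ℝ} (hp : p ≤ 0) :
    ConvexOn ℝ (Ioi 0) fun t : ℝ ↦ t ^ p := by
  have hlog : ConvexOn ℝ (Ioi 0) fun t ↦ p * Real.log t := by
    simpa [smul_eq_mul, neg_mul_neg] using
      strictConcaveOn_log_Ioi.concaveOn.neg.smul (neg_nonneg.2 hp)
  refine ⟨convex_Ioi 0, fun x hx y hy a b ha hb hab ↦ ?_⟩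
  have hxy : 0 < a • x + b • y := (convex_Ioi 0) hx hy ha hb hab
  calc (a • x + b • y) ^ p = Real.exp (p * Real.log (a • x + b • y)) := by
        rw [Real.rpow_def_of_pos hxy, mul_comm]
    _ ≤ Real.exp (a • (p * Real.log x) + b • (p * Real.log y)) :=
        Real.exp_le_exp.2 (hlog.2 hx hy ha hb hab)
    _ ≤ a • Real.exp (p * Real.log x) + b • Real.exp (p * Real.log y) :=
        convexOn_exp.2 trivial trivial ha hb hab
    _ = a • x ^ p + b • y ^ p := by
        rw [Real.rpow_def_of_pos hx, Real.rpow_def_of_pos hy, mul_comm p, mul_comm p]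

theorem ConvexOn.map_add_map_le_of_add_eq {s : Set ℝ} {f : ℝ → ℝ} (hf : ConvexOn ℝ s f)
    {a b c d : ℝ} (ha : a ∈ s) (hd : d ∈ s) (hab : a ≤ b) (hac : a ≤ c) (h : b + c = a + d) :
    f b + f c ≤ f a + f d := by
  obtain rfl | had := (hab.trans (show b ≤ d by linarith)).eq_or_lt
  · obtain rfl : b = a := by linarith
    obtain rfl : c = b := by linarith
    rfl
  have hda : 0 < d - a := sub_pos.2 had
  have chord : ∀ x, a ≤ x → x ≤ d → f x ≤ (d - x) / (d - a) * f a + (x - a) / (d - a) * f d := by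
    intro x hax hxd
    have hx : (d - x) / (d - a) * a + (x - a) / (d - a) * d = x := by field_simp; ring
    simpa only [smul_eq_mul, hx] using hf.2 ha hd (div_nonneg (sub_nonneg.2 hxd) hda.le)
      (div_nonneg (sub_nonneg.2 hax) hda.le) (by field_simp; ring)
  have hb := chord b hab (by linarith)
  have hc := chord c hac (by linarith)
  have hwa : (d - b) / (d - a) + (d - c) / (d - a) = 1 := by field_simp; linarith
  have hwd : (b - a) / (d - a) + (c - a) / (d - a) = 1 := by field_simp; linarith
  calc f b + f c ≤ ((d - b) / (d - a) + (d - c) / (d - a)) * f a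
        + ((b - a) / (d - a) + (c - a) / (d - a)) * f d := by linarith
    _ = f a + f d := by rw [hwa, hwd, one_mul, one_mul]

theorem Real.rpow_eq_mul_rpow_sub_one {t α : ℝ} (ht : 0 ≤ t) (hα : α ≠ 0) :
    t ^ α = t * t ^ (α - 1) := by
  conv_lhs => rw [← add_sub_cancel 1 α]
  rw [Real.rpow_add' ht (by rwa [add_sub_cancel]), Real.rpow_one]

theorem hornichHlawka_rpow_of_nonneg {α a b c : ℝ} (hα0 : 0 < α) (hα1 : α ≤ 1)
    (ha : 0 ≤ a) (hb : 0 ≤ b) (hc : 0 ≤ c) :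
    (a + b) ^ α + (b + c) ^ α + (c + a) ^ α ≤ a ^ α + b ^ α + c ^ α + (a + b + c) ^ α := by
  have hconv := convexOn_rpow_of_nonpos (show α - 1 ≤ 0 by linarith)
  have weighted : ∀ {u p q s : ℝ}, 0 ≤ u → u ≤ p → u ≤ q → p + q = u + s →
      u * (p ^ (α - 1) + q ^ (α - 1)) ≤ u * (u ^ (α - 1) + s ^ (α - 1)) := by
    intro u p q s hu hup huq h
    obtain rfl | hu := hu.eq_or_lt
    · simp
    · exact mul_le_mul_of_nonneg_left
        (hconv.map_add_map_le_of_add_eq hu (by simp only [mem_Ioi]; linarith) hup huq h) hu.le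
  have hA := weighted (p := a + b) (q := c + a) (s := a + b + c) ha (by linarith) (by linarith)
    (by ring)
  have hB := weighted (p := a + b) (q := b + c) (s := a + b + c) hb (by linarith) (by linarith)
    (by ring)
  have hC := weighted (p := b + c) (q := c + a) (s := a + b + c) hc (by linarith) (by linarith)
    (by ring)
  have split := fun {t : ℝ} (ht : 0 ≤ t) ↦ Real.rpow_eq_mul_rpow_sub_one ht hα0.ne'
  rw [split ha, split hb, split hc, split (by positivity : 0 ≤ a + b),
    split (by positivity : 0 ≤ b + c), split (by positivity : 0 ≤ c + a),
    split (by positivity : 0 ≤ a + b + c)]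
  linear_combination hA + hB + hC

theorem abs_add_rpow_le {α : ℝ} (hα0 : 0 ≤ α) (hα1 : α ≤ 1) (s t : ℝ) :
    |s + t| ^ α ≤ |s| ^ α + |t| ^ α :=
  (Real.rpow_le_rpow (abs_nonneg _) (abs_add_le s t) hα0).trans
    (Real.rpow_add_le_add_rpow (abs_nonneg s) (abs_nonneg t) hα0 hα1)

def HornichHlawka (α x y z : ℝ) : Prop :=
  |x + y| ^ α + |y + z| ^ α + |z + x| ^ α ≤ |x| ^ α + |y| ^ α + |z| ^ α + |x + y + z| ^ α

namespace HornichHlawka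

variable {α x y z : ℝ}

theorem rotate (h : HornichHlawka α x y z) : HornichHlawka α y z x := by
  unfold HornichHlawka at *
  rw [show y + z + x = x + y + z by ring]
  linarith

theorem of_neg (h : HornichHlawka α (-x) (-y) (-z)) : HornichHlawka α x y z := by
  simpa only [HornichHlawka, ← neg_add, abs_neg] using h

theorem of_neg_sum (h : HornichHlawka α x y (-(x + y + z))) : HornichHlawka α x y z := by
  unfold HornichHlawka at *
  rw [show x + y + -(x + y + z) = -z by ring, show y + -(x + y + z) = -(z + x) by ring,
    show -(x + y + z) + x = -(y + z) by ring, abs_neg, abs_neg, abs_neg, abs_neg] at h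
  linarith

theorem of_nonneg (hα0 : 0 < α) (hα1 : α ≤ 1) (hx : 0 ≤ x) (hy : 0 ≤ y) (hz : 0 ≤ z) :
    HornichHlawka α x y z := by
  unfold HornichHlawka
  rw [abs_of_nonneg hx, abs_of_nonneg hy, abs_of_nonneg hz, abs_of_nonneg (add_nonneg hx hy),
    abs_of_nonneg (add_nonneg hy hz), abs_of_nonneg (add_nonneg hz hx),
    abs_of_nonneg (by positivity : 0 ≤ x + y + z)]
  exact hornichHlawka_rpow_of_nonneg hα0 hα1 hx hy hz

theorem of_nonneg_of_nonneg_of_nonpos (hα0 : 0 ≤ α) (hα1 : α ≤ 1) (hx : 0 ≤ x) (hy : 0 ≤ y)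
    (hz : z ≤ 0) (hs : 0 ≤ x + y + z) : HornichHlawka α x y z := by
  have mono : ∀ {s t : ℝ}, |s| ≤ |t| → |s| ^ α ≤ |t| ^ α :=
    fun h ↦ Real.rpow_le_rpow (abs_nonneg _) h hα0
  have hxy : |x + y| ^ α ≤ |x + y + z| ^ α + |z| ^ α := by
    simpa [abs_neg] using abs_add_rpow_le hα0 hα1 (x + y + z) (-z)
  unfold HornichHlawka
  rcases le_total 0 (y + z) with hyz | hyz <;> rcases le_total 0 (z + x) with hzx | hzx
  · linarith [mono (abs_le_abs_of_nonneg hyz (by linarith : y + z ≤ y)),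
      mono (abs_le_abs_of_nonneg hzx (by linarith : z + x ≤ x))]
  · linarith [abs_add_rpow_le hα0 hα1 x y,
      mono (abs_le_abs_of_nonneg hyz (by linarith : y + z ≤ x + y + z)),
      mono (abs_le_abs_of_nonpos hzx (by linarith : z ≤ z + x))]
  · linarith [abs_add_rpow_le hα0 hα1 x y,
      mono (abs_le_abs_of_nonpos hyz (by linarith : z ≤ y + z)),
      mono (abs_le_abs_of_nonneg hzx (by linarith : z + x ≤ x + y + z))]
  · linarith [mono (abs_le_abs (by linarith : y + z ≤ x) (by linarith)),
      mono (abs_le_abs (by linarith : z + x ≤ y) (by linarith))]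

theorem of_nonneg_of_nonneg (hα0 : 0 < α) (hα1 : α ≤ 1) (hx : 0 ≤ x) (hy : 0 ≤ y) :
    HornichHlawka α x y z := by
  rcases le_total 0 z with hz | hz
  · exact of_nonneg hα0 hα1 hx hy hz
  rcases le_total 0 (x + y + z) with hs | hs
  · exact of_nonneg_of_nonneg_of_nonpos hα0.le hα1 hx hy hz hs
  · exact of_neg_sum (of_nonneg hα0 hα1 hx hy (by linarith))

theorem of_mul_nonneg (hα0 : 0 < α) (hα1 : α ≤ 1) (h : 0 ≤ x * y) : HornichHlawka α x y z := by
  rcases mul_nonneg_iff.1 h with ⟨hx, hy⟩ | ⟨hx, hy⟩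
  · exact of_nonneg_of_nonneg hα0 hα1 hx hy
  · exact of_neg (of_nonneg_of_nonneg hα0 hα1 (neg_nonneg.2 hx) (neg_nonneg.2 hy))

end HornichHlawka

theorem stmt19 (x y z α : ℝ) (hα0 : 0 < α) (hα1 : α ≤ 1) :
    |x + y| ^ α + |y + z| ^ α + |z + x| ^ α ≤
      |x| ^ α + |y| ^ α + |z| ^ α + |x + y + z| ^ α := by
  have hpair : 0 ≤ x * y ∨ 0 ≤ y * z ∨ 0 ≤ z * x := by
    by_contra! h
    nlinarith [mul_neg_of_pos_of_neg (mul_pos_of_neg_of_neg h.1 h.2.1) h.2.2, sq_nonneg (x * y * z)]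
  rcases hpair with h | h | h
  · exact HornichHlawka.of_mul_nonneg hα0 hα1 h
  · exact (HornichHlawka.of_mul_nonneg hα0 hα1 h).rotate.rotate
  · exact (HornichHlawka.of_mul_nonneg hα0 hα1 h).rotate
end
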